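/- arXiv:1304.4894 — 8 statements merged into one kernel-verified Lean document; each statement's English description precedes it below -/
import Mathlib

section
/- Let J = [0,∞) and let f : J → ℝ be differentiable on the interior of J with f' integrable on [u,v], where u, v ∈ J and 0 < u < v. If |f'| is convex on [u,v], then for every x ∈ [u,v]: |((v-x)(v·f(v) - u·f(x)) + (x-u)(v·f(x) - u·f(u)))/(v-u)² - (1/(v-u))·∫_u^v f(μ) dμ| ≤ ((v-x)²/(6(v-u)²))·[(2u+v)·|f'(x)| + (u+2v)·|f'(v)|] + ((x-u)²/(6(v-u)²))·[(u+2v)·|f'(x)| + (2u+v)·|f'(u)|]. -/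
/-!
Integrating by parts against the piecewise linear kernel `t - u (v - x)/(v - u)` on `[u, x]` and
`t - v (x - u)/(v - u)` on `[x, v]` turns the left-hand side into `1/(v - u)` times the integral of
the kernel against `f'`. Both kernels are nonnegative, so convexity of `|f'|` bounds `|f'|` on each
piece by the chord through its endpoints, and the resulting polynomial integrals give the bound.
-/

open Set intervalIntegral
open MeasureTheory (volume)

lemma convexOn_of_forall_le_convex_combination {s : Set ℝ} {g : ℝ → ℝ} (hs : Convex ℝ s)
    (h : ∀ a ∈ s, ∀ b ∈ s, ∀ t ∈ Icc (0:ℝ) 1, g (t * a + (1 - t) * b) ≤ t * g a + (1 - t) * g b) :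
    ConvexOn ℝ s g := by
  refine ⟨hs, fun a ha b hb p q hp hq hpq => ?_⟩
  obtain rfl : q = 1 - p := by linarith
  simpa using h a ha b hb p ⟨hp, by linarith⟩

lemma ConvexOn.mul_le_of_mem_Icc {s : Set ℝ} {g : ℝ → ℝ} (hg : ConvexOn ℝ s g) {a b t : ℝ}
    (ha : a ∈ s) (hb : b ∈ s) (ht : t ∈ Icc a b) :
    (b - a) * g t ≤ (b - t) * g a + (t - a) * g b := by
  rcases ht.1.eq_or_lt with rfl | hat
  · linarith
  rcases ht.2.eq_or_lt with rfl | htb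
  · linarith
  exact hg.secant_mono_aux1 ha hb hat htb

lemma integral_quadratic (α β γ a b : ℝ) :
    ∫ t in a..b, (α * t ^ 2 + β * t + γ)
      = α * (b ^ 3 - a ^ 3) / 3 + β * (b ^ 2 - a ^ 2) / 2 + γ * (b - a) := by
  rw [integral_add, integral_add, integral_const_mul, integral_const_mul, integral_pow, integral_id,
    integral_const]
  · simp only [smul_eq_mul]; ring
  all_goals exact (by fun_prop : Continuous _).intervalIntegrable _ _

lemma integral_sub_mul_chord (A B a b c : ℝ) :
    ∫ t in a..b, (t - c) * ((b - t) * A + (t - a) * B)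
      = (b - a) ^ 2 * ((b - a) * (A + 2 * B) / 6 + (a - c) * (A + B) / 2) := by
  have hexpand : ∀ t, (t - c) * ((b - t) * A + (t - a) * B)
      = (B - A) * t ^ 2 + (A * b - B * a - c * (B - A)) * t + c * (B * a - A * b) := by
    intro t; ring
  simp only [hexpand, integral_quadratic]
  ring

lemma ConvexOn.integral_sub_mul_le {g : ℝ → ℝ} {a b c : ℝ} (hg : ConvexOn ℝ (Icc a b) g)
    (hgi : IntervalIntegrable g volume a b) (hca : c ≤ a) (hab : a ≤ b) :
    ∫ t in a..b, (t - c) * g t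
      ≤ (b - a) * ((b - a) * (g a + 2 * g b) / 6 + (a - c) * (g a + g b) / 2) := by
  rcases hab.eq_or_lt with rfl | hab
  · simp
  have hchord : (b - a) * ∫ t in a..b, (t - c) * g t
      ≤ ∫ t in a..b, (t - c) * ((b - t) * g a + (t - a) * g b) := by
    rw [← integral_const_mul]
    refine integral_mono_on hab.le
      ((hgi.continuousOn_mul (by fun_prop)).const_mul _)
      ((by fun_prop : Continuous _).intervalIntegrable _ _) fun t ht => ?_
    calc (b - a) * ((t - c) * g t) = (t - c) * ((b - a) * g t) := by ring
      _ ≤ (t - c) * ((b - t) * g a + (t - a) * g b) :=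
        mul_le_mul_of_nonneg_left
          (hg.mul_le_of_mem_Icc (left_mem_Icc.2 hab.le) (right_mem_Icc.2 hab.le) ht)
          (by linarith [ht.1])
  rw [integral_sub_mul_chord, pow_two, mul_assoc] at hchord
  exact le_of_mul_le_mul_left hchord (by linarith)

lemma abs_integral_sub_mul_le {φ : ℝ → ℝ} {a b c : ℝ} (hφ : ConvexOn ℝ (Icc a b) (|φ ·|))
    (hφi : IntervalIntegrable φ volume a b) (hca : c ≤ a) (hab : a ≤ b) :
    |∫ t in a..b, (t - c) * φ t|
      ≤ (b - a) * ((b - a) * (|φ a| + 2 * |φ b|) / 6 + (a - c) * (|φ a| + |φ b|) / 2) := by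
  have hkernel : ∫ t in a..b, |(t - c) * φ t| = ∫ t in a..b, (t - c) * |φ t| := by
    refine integral_congr fun t ht => ?_
    rw [uIcc_of_le hab] at ht
    simp only [abs_mul, abs_of_nonneg (by linarith [ht.1] : 0 ≤ t - c)]
  calc |∫ t in a..b, (t - c) * φ t| ≤ ∫ t in a..b, |(t - c) * φ t| :=
        abs_integral_le_integral_abs hab
    _ = ∫ t in a..b, (t - c) * |φ t| := hkernel
    _ ≤ _ := hφ.integral_sub_mul_le hφi.abs hca hab

lemma integral_sub_mul_deriv {f f' : ℝ → ℝ} {a b : ℝ} (c : ℝ)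
    (hf : ∀ t ∈ uIcc a b, HasDerivAt f (f' t) t) (hf' : IntervalIntegrable f' volume a b) :
    ∫ t in a..b, (t - c) * f' t = (b - c) * f b - (a - c) * f a - ∫ t in a..b, f t := by
  simpa using integral_mul_deriv_eq_deriv_mul (fun t _ => (hasDerivAt_id t).sub_const c) hf
    intervalIntegrable_const hf'

lemma sub_average_eq_integral_kernel_mul_deriv {f f' : ℝ → ℝ} {u v x : ℝ} (huv : u < v)
    (hf : ∀ t ∈ Icc u v, HasDerivAt f (f' t) t) (hf' : IntervalIntegrable f' volume u v)
    (hx : x ∈ Icc u v) :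
    ((v - x) * (v * f v - u * f x) + (x - u) * (v * f x - u * f u)) / (v - u) ^ 2
        - (1 / (v - u)) * ∫ t in u..v, f t
      = ((∫ t in u..x, (t - u * (v - x) / (v - u)) * f' t)
          + ∫ t in x..v, (t - v * (x - u) / (v - u)) * f' t) / (v - u) := by
  have hux : uIcc u x ⊆ Icc u v := by rw [uIcc_of_le hx.1]; exact Icc_subset_Icc_right hx.2
  have hxv : uIcc x v ⊆ Icc u v := by rw [uIcc_of_le hx.2]; exact Icc_subset_Icc_left hx.1
  have hfc : ContinuousOn f (Icc u v) := fun t ht => (hf t ht).continuousAt.continuousWithinAt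
  have huvIcc : uIcc u v = Icc u v := uIcc_of_le huv.le
  rw [integral_sub_mul_deriv _ (fun t ht => hf t (hux ht)) (hf'.mono_set (huvIcc ▸ hux)),
    integral_sub_mul_deriv _ (fun t ht => hf t (hxv ht)) (hf'.mono_set (huvIcc ▸ hxv)),
    ← integral_add_adjacent_intervals ((hfc.mono hux).intervalIntegrable)
      ((hfc.mono hxv).intervalIntegrable)]
  have hvu : v - u ≠ 0 := by linarith
  field_simp
  ring

theorem stmt_1 (f f' : ℝ → ℝ) (u v : ℝ) (hu : 0 < u) (huv : u < v)
    (hderiv : ∀ y ∈ interior (Set.Ici (0:ℝ)), HasDerivAt f (f' y) y)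
    (hint : IntervalIntegrable f' MeasureTheory.volume u v)
    (hconv : ∀ a ∈ Set.Icc u v, ∀ b ∈ Set.Icc u v, ∀ t ∈ Set.Icc (0:ℝ) 1,
      |f' (t * a + (1 - t) * b)| ≤ t * |f' a| + (1 - t) * |f' b|)
    (x : ℝ) (hx : x ∈ Set.Icc u v) :
    |((v - x) * (v * f v - u * f x) + (x - u) * (v * f x - u * f u)) / (v - u) ^ 2
        - (1 / (v - u)) * ∫ μ in u..v, f μ|
      ≤ ((v - x) ^ 2 / (6 * (v - u) ^ 2)) *
          ((2 * u + v) * |f' x| + (u + 2 * v) * |f' v|)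
        + ((x - u) ^ 2 / (6 * (v - u) ^ 2)) *
          ((u + 2 * v) * |f' x| + (2 * u + v) * |f' u|) := by
  have hvu : 0 < v - u := by linarith
  have hf : ∀ t ∈ Icc u v, HasDerivAt f (f' t) t :=
    fun t ht => hderiv t (by rw [interior_Ici]; exact hu.trans_le ht.1)
  have hf'conv : ConvexOn ℝ (Icc u v) (|f' ·|) :=
    convexOn_of_forall_le_convex_combination (convex_Icc u v) hconv
  have hux : uIcc u x ⊆ uIcc u v := uIcc_subset_uIcc_left (by rwa [uIcc_of_le huv.le])
  have hxv : uIcc x v ⊆ uIcc u v := uIcc_subset_uIcc_right (by rwa [uIcc_of_le huv.le])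
  have hleft := abs_integral_sub_mul_le (hf'conv.subset (Icc_subset_Icc_right hx.2)
    (convex_Icc _ _)) (hint.mono_set hux) (c := u * (v - x) / (v - u))
    (by rw [div_le_iff₀ hvu]; nlinarith [mul_le_mul_of_nonneg_left hx.1 hu.le]) hx.1
  have hright := abs_integral_sub_mul_le (hf'conv.subset (Icc_subset_Icc_left hx.1)
    (convex_Icc _ _)) (hint.mono_set hxv) (c := v * (x - u) / (v - u))
    (by rw [div_le_iff₀ hvu]; nlinarith [hx.2]) hx.2
  rw [sub_average_eq_integral_kernel_mul_deriv huv hf hint hx, abs_div, abs_of_pos hvu,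
    div_le_iff₀ hvu]
  refine (abs_add_le _ _).trans ((add_le_add hleft hright).trans_eq ?_)
  field_simp
  ring
end

section
/- Let J = [0,∞) and let f : J → ℝ be differentiable on the interior of J with f' integrable on [u,v], where u, v ∈ J and 0 < u < v. If |f'| is s-convex in the second sense on [u,v] for some fixed s ∈ (0,1], then for every x ∈ [u,v]: |((v-x)(v·f(v) - u·f(x)) + (x-u)(v·f(x) - u·f(u)))/(v-u)² - (1/(v-u))·∫_u^v f(μ) dμ| ≤ ((v-x)²/(v-u)²)·[(((s+1)u+v)·|f'(x)| + (u+(s+1)v)·|f'(v)|)/((s+1)(s+2))] + ((x-u)²/(v-u)²)·[((u+(s+1)v)·|f'(x)| + ((s+1)u+v)·|f'(u)|)/((s+1)(s+2))]. -/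
/-!
Split `[u, v]` at `x` and let `(a, b)` be `(u, v)` or `(v, u)`. Integrating
`((b - a) μ - a (b - x)) f'(μ)` over `[a, x]` by parts gives
`(x - a)(b f(x) - a f(a)) - (b - a) ∫ₐˣ f`, and the two choices of `(a, b)` add up to
`(v - u)²` times the quantity to be bounded. Substituting `μ = t x + (1 - t) a` turns the same
integral into `(x - a)² ∫₀¹ (t b + (1 - t) a) f'(t x + (1 - t) a) dt`, which the s-convexity of
`|f'|` bounds by `(x - a)² ∫₀¹ (t b + (1 - t) a) (tˢ |f'(x)| + (1 - t)ˢ |f'(a)|) dt`, a Beta-type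
integral.
-/

open MeasureTheory Set

section UnitInterval

variable {s : ℝ}

lemma integral_affine_mul_rpow (hs : 0 ≤ s) (p q : ℝ) :
    ∫ t in (0:ℝ)..1, (t * p + (1 - t) * q) * t ^ s = ((s + 1) * p + q) / ((s + 1) * (s + 2)) := by
  have hpow : EqOn (fun t : ℝ => (t * p + (1 - t) * q) * t ^ s)
      (fun t => (p - q) * t ^ (s + 1) + q * t ^ s) (uIcc 0 1) := by
    intro t ht
    rw [uIcc_of_le zero_le_one] at ht
    simp only [Real.rpow_add_one' ht.1 (by linarith)]
    ring
  have hint : ∀ r : ℝ, 0 ≤ r → IntervalIntegrable (fun t : ℝ => t ^ r) volume 0 1 :=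
    fun r hr => (Real.continuous_rpow_const hr).intervalIntegrable 0 1
  rw [intervalIntegral.integral_congr hpow,
    intervalIntegral.integral_add ((hint _ (by linarith)).const_mul _) ((hint s hs).const_mul _),
    intervalIntegral.integral_const_mul, intervalIntegral.integral_const_mul,
    integral_rpow (Or.inl (by linarith)), integral_rpow (Or.inl (by linarith))]
  simp only [Real.one_rpow, Real.zero_rpow (by linarith : s + 1 + 1 ≠ 0),
    Real.zero_rpow (by linarith : s + 1 ≠ 0)]
  field_simp
  ring

lemma integral_affine_mul_one_sub_rpow (hs : 0 ≤ s) (p q : ℝ) :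
    ∫ t in (0:ℝ)..1, (t * p + (1 - t) * q) * (1 - t) ^ s
      = (p + (s + 1) * q) / ((s + 1) * (s + 2)) := by
  have h := intervalIntegral.integral_comp_sub_left (a := 0) (b := 1)
    (fun t : ℝ => (t * q + (1 - t) * p) * t ^ s) 1
  norm_num only [sub_sub_cancel, sub_zero, sub_self] at h
  rw [add_comm p, ← integral_affine_mul_rpow hs q p, ← h]
  congr 1 with t
  ring

lemma abs_integral_affine_mul_le (hs : 0 ≤ s) {p q A B : ℝ} (hp : 0 ≤ p) (hq : 0 ≤ q)
    {g : ℝ → ℝ} (hg : ∀ t ∈ Icc (0:ℝ) 1, |g t| ≤ t ^ s * A + (1 - t) ^ s * B) :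
    |∫ t in (0:ℝ)..1, (t * p + (1 - t) * q) * g t|
      ≤ (((s + 1) * p + q) * A + (p + (s + 1) * q) * B) / ((s + 1) * (s + 2)) := by
  have hpow := Real.continuous_rpow_const hs
  have hcont : Continuous fun t : ℝ => (t * p + (1 - t) * q) * t ^ s := by fun_prop
  have hcont' : Continuous fun t : ℝ => (t * p + (1 - t) * q) * (1 - t) ^ s := by fun_prop
  calc |∫ t in (0:ℝ)..1, (t * p + (1 - t) * q) * g t|
      ≤ ∫ t in (0:ℝ)..1, A * ((t * p + (1 - t) * q) * t ^ s)
          + B * ((t * p + (1 - t) * q) * (1 - t) ^ s) := by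
        rw [← Real.norm_eq_abs]
        refine intervalIntegral.norm_integral_le_of_norm_le zero_le_one
          (ae_of_all _ fun t ht => ?_) (((hcont.intervalIntegrable 0 1).const_mul A).add
            ((hcont'.intervalIntegrable 0 1).const_mul B))
        have hw : 0 ≤ t * p + (1 - t) * q :=
          add_nonneg (mul_nonneg ht.1.le hp) (mul_nonneg (sub_nonneg.2 ht.2) hq)
        rw [Real.norm_eq_abs, abs_mul, abs_of_nonneg hw]
        exact (mul_le_mul_of_nonneg_left (hg t (Ioc_subset_Icc_self ht)) hw).trans_eq (by ring)
    _ = _ := by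
        rw [intervalIntegral.integral_add ((hcont.intervalIntegrable 0 1).const_mul A)
            ((hcont'.intervalIntegrable 0 1).const_mul B),
          intervalIntegral.integral_const_mul, intervalIntegral.integral_const_mul,
          integral_affine_mul_rpow hs, integral_affine_mul_one_sub_rpow hs]
        ring

end UnitInterval

lemma integral_affine_mul_deriv_eq {f f' : ℝ → ℝ} {a x : ℝ} (b : ℝ)
    (hf : ∀ μ ∈ uIcc a x, HasDerivAt f (f' μ) μ) (hf' : IntervalIntegrable f' volume a x) :
    ∫ μ in a..x, ((b - a) * μ - a * (b - x)) * f' μ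
      = (x - a) * (b * f x - a * f a) - (b - a) * ∫ μ in a..x, f μ := by
  have hk : ∀ μ, HasDerivAt (fun μ => (b - a) * μ - a * (b - x)) (b - a) μ := fun μ => by
    simpa using ((hasDerivAt_id μ).const_mul (b - a)).sub_const (a * (b - x))
  rw [intervalIntegral.integral_mul_deriv_eq_deriv_mul (fun μ _ => hk μ) hf
    intervalIntegrable_const hf', intervalIntegral.integral_const_mul]
  ring

lemma integral_affine_mul_eq_sq_mul_integral_unitInterval (g : ℝ → ℝ) (a b x : ℝ) :
    ∫ μ in a..x, ((b - a) * μ - a * (b - x)) * g μ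
      = (x - a) ^ 2 * ∫ t in (0:ℝ)..1, (t * b + (1 - t) * a) * g (t * x + (1 - t) * a) := by
  have h := intervalIntegral.smul_integral_comp_mul_add (a := 0) (b := 1)
    (fun μ => ((b - a) * μ - a * (b - x)) * g μ) (x - a) a
  simp only [mul_zero, zero_add, mul_one, sub_add_cancel, smul_eq_mul] at h
  rw [← h, sq, mul_assoc]
  congr 1
  rw [← intervalIntegral.integral_const_mul]
  refine intervalIntegral.integral_congr fun t _ => ?_
  rw [show (x - a) * t + a = t * x + (1 - t) * a by ring]
  ring

lemma abs_boundary_sub_integral_le {f f' : ℝ → ℝ} {a b x s : ℝ} (hs : 0 ≤ s) (ha : 0 ≤ a)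
    (hb : 0 ≤ b) (hf : ∀ μ ∈ uIcc a x, HasDerivAt f (f' μ) μ)
    (hf' : IntervalIntegrable f' volume a x)
    (hconv : ∀ t ∈ Icc (0:ℝ) 1,
      |f' (t * x + (1 - t) * a)| ≤ t ^ s * |f' x| + (1 - t) ^ s * |f' a|) :
    |(x - a) * (b * f x - a * f a) - (b - a) * ∫ μ in a..x, f μ|
      ≤ (x - a) ^ 2 *
          ((((s + 1) * b + a) * |f' x| + (b + (s + 1) * a) * |f' a|) / ((s + 1) * (s + 2))) := by
  rw [← integral_affine_mul_deriv_eq b hf hf',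
    integral_affine_mul_eq_sq_mul_integral_unitInterval, abs_mul, abs_of_nonneg (sq_nonneg _)]
  exact mul_le_mul_of_nonneg_left (abs_integral_affine_mul_le hs hb ha hconv) (sq_nonneg _)

theorem stmt_2_general (f f' : ℝ → ℝ) (u v s : ℝ) (hu : 0 < u) (huv : u < v)
    (hs0 : 0 < s)
    (hderiv : ∀ y ∈ interior (Set.Ici (0:ℝ)), HasDerivAt f (f' y) y)
    (hint : IntervalIntegrable f' MeasureTheory.volume u v)
    (hsconv : ∀ a ∈ Set.Icc u v, ∀ b ∈ Set.Icc u v, ∀ t ∈ Set.Icc (0:ℝ) 1,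
      |f' (t * a + (1 - t) * b)| ≤ t ^ s * |f' a| + (1 - t) ^ s * |f' b|)
    (x : ℝ) (hx : x ∈ Set.Icc u v) :
    |((v - x) * (v * f v - u * f x) + (x - u) * (v * f x - u * f u)) / (v - u) ^ 2
        - (1 / (v - u)) * ∫ μ in u..v, f μ|
      ≤ ((v - x) ^ 2 / (v - u) ^ 2) *
          ((((s + 1) * u + v) * |f' x| + (u + (s + 1) * v) * |f' v|) / ((s + 1) * (s + 2)))
        + ((x - u) ^ 2 / (v - u) ^ 2) *
          (((u + (s + 1) * v) * |f' x| + ((s + 1) * u + v) * |f' u|) / ((s + 1) * (s + 2))) := by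
  have hf : ∀ y ∈ Icc u v, HasDerivAt f (f' y) y := fun y hy =>
    hderiv y (by rw [interior_Ici]; exact hu.trans_le hy.1)
  have hsub : ∀ a ∈ Icc u v, uIcc a x ⊆ Icc u v := fun a ha => uIcc_subset_Icc ha hx
  have hf' : ∀ a ∈ Icc u v, IntervalIntegrable f' volume a x := fun a ha =>
    hint.mono_set (by rw [uIcc_of_le huv.le]; exact hsub a ha)
  have hfint : ∀ a ∈ Icc u v, IntervalIntegrable f volume a x := fun a ha =>
    ContinuousOn.intervalIntegrable fun y hy =>
      (hf y (hsub a ha hy)).continuousAt.continuousWithinAt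
  have hu_mem : u ∈ Icc u v := left_mem_Icc.2 huv.le
  have hv_mem : v ∈ Icc u v := right_mem_Icc.2 huv.le
  have hleft := abs_boundary_sub_integral_le hs0.le hu.le (hu.le.trans huv.le)
    (fun μ hμ => hf μ (hsub u hu_mem hμ)) (hf' u hu_mem) (hsconv x hx u hu_mem)
  have hright := abs_boundary_sub_integral_le hs0.le (hu.le.trans huv.le) hu.le
    (fun μ hμ => hf μ (hsub v hv_mem hμ)) (hf' v hv_mem) (hsconv x hx v hv_mem)
  have hsplit := intervalIntegral.integral_add_adjacent_intervals (hfint u hu_mem)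
    (hfint v hv_mem).symm
  have hvu : 0 < (v - u) ^ 2 := pow_pos (sub_pos.2 huv) 2
  have hsum := div_le_div_of_nonneg_right ((abs_add_le _ _).trans (add_le_add hleft hright)) hvu.le
  refine Eq.trans_le ?_ (hsum.trans_eq ?_)
  · conv_rhs => rw [← abs_of_pos hvu, ← abs_div]
    rw [← hsplit, intervalIntegral.integral_symm v x]
    congr 1
    field_simp
    ring
  · ring

theorem stmt_2 (f f' : ℝ → ℝ) (u v s : ℝ) (hu : 0 < u) (huv : u < v)
    (hs0 : 0 < s) (hs1 : s ≤ 1)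
    (hderiv : ∀ y ∈ interior (Set.Ici (0:ℝ)), HasDerivAt f (f' y) y)
    (hint : IntervalIntegrable f' MeasureTheory.volume u v)
    (hsconv : ∀ a ∈ Set.Icc u v, ∀ b ∈ Set.Icc u v, ∀ t ∈ Set.Icc (0:ℝ) 1,
      |f' (t * a + (1 - t) * b)| ≤ t ^ s * |f' a| + (1 - t) ^ s * |f' b|)
    (x : ℝ) (hx : x ∈ Set.Icc u v) :
    |((v - x) * (v * f v - u * f x) + (x - u) * (v * f x - u * f u)) / (v - u) ^ 2
        - (1 / (v - u)) * ∫ μ in u..v, f μ|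
      ≤ ((v - x) ^ 2 / (v - u) ^ 2) *
          ((((s + 1) * u + v) * |f' x| + (u + (s + 1) * v) * |f' v|) / ((s + 1) * (s + 2)))
        + ((x - u) ^ 2 / (v - u) ^ 2) *
          (((u + (s + 1) * v) * |f' x| + ((s + 1) * u + v) * |f' u|) / ((s + 1) * (s + 2))) :=
  stmt_2_general f f' u v s hu huv hs0 hderiv hint hsconv x hx
end

section
/- Let J = [0,∞) and let f : J → ℝ be differentiable on the interior of J with f' integrable on [u,v], where u, v ∈ J and 0 < u < v. If |f'| is s-convex in the second sense on [u,v] for some fixed s ∈ (0,1], then: |(v·f(v) - u·f(u))/(2(v-u)) + (1/2)·f((u+v)/2) - (1/(v-u))·∫_u^v f(μ) dμ| ≤ (1/4)·[(((s+1)u+v)·|f'((u+v)/2)| + (u+(s+1)v)·|f'(v)|)/((s+1)(s+2))] + (1/4)·[((u+(s+1)v)·|f'((u+v)/2)| + ((s+1)u+v)·|f'(u)|)/((s+1)(s+2))]. -/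
/-! Split `[u, v]` at its midpoint `m`. On each half, integration by parts against the affine
weight running from `u` to `v` turns the left-hand side into `1/4` of the sum of two integrals
`∫₀¹ (t v + (1 - t) u) f'(x(t)) dt`, with `x(t)` the affine parametrization of that half.
Bounding `|f'(x(t))|` by `s`-convexity between the endpoints of the half leaves only the
integrals `∫₀¹ t ^ s (t q + (1 - t) p) dt = ((s + 1) q + p) / ((s + 1) (s + 2))` and their
mirror images under `t ↦ 1 - t`. -/

open Set MeasureTheory intervalIntegral

theorem integral_rpow_mul_affine {s : ℝ} (hs : -1 < s) (p q : ℝ) :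
    ∫ t in (0:ℝ)..1, t ^ s * (t * q + (1 - t) * p) = ((s + 1) * q + p) / ((s + 1) * (s + 2)) := by
  have hs1 : s + 1 ≠ 0 := by linarith
  have hs2 : s + 2 ≠ 0 := by linarith
  have hsplit : EqOn (fun t : ℝ => t ^ s * (t * q + (1 - t) * p))
      (fun t => (q - p) * t ^ (s + 1) + p * t ^ s) (uIcc 0 1) := by
    intro t ht
    have ht0 : 0 ≤ t := by simpa using ht.1
    simp only [Real.rpow_add' ht0 hs1, Real.rpow_one]
    ring
  rw [integral_congr hsplit, integral_add
      ((intervalIntegrable_rpow' (by linarith)).const_mul _)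
      ((intervalIntegrable_rpow' hs).const_mul _),
    intervalIntegral.integral_const_mul, intervalIntegral.integral_const_mul,
    integral_rpow (Or.inl (by linarith)), integral_rpow (Or.inl hs),
    Real.zero_rpow hs1, Real.zero_rpow (by linarith : s + 1 + 1 ≠ 0),
    Real.one_rpow, Real.one_rpow, show s + 1 + 1 = s + 2 by ring]
  field_simp
  ring

theorem integral_one_sub_rpow_mul_affine {s : ℝ} (hs : -1 < s) (p q : ℝ) :
    ∫ t in (0:ℝ)..1, (1 - t) ^ s * (t * q + (1 - t) * p)
      = ((s + 1) * p + q) / ((s + 1) * (s + 2)) := by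
  have hreflect :=
    integral_comp_sub_left (fun t : ℝ => t ^ s * (t * p + (1 - t) * q)) 1 (a := 0) (b := 1)
  simp only [sub_sub_cancel, sub_self, sub_zero] at hreflect
  rw [← integral_rpow_mul_affine hs q p, ← hreflect]
  congr 1; ext t; ring

theorem intervalIntegrable_rpow_affine_mul {s : ℝ} (hs : -1 < s) (p q A B : ℝ) :
    IntervalIntegrable (fun t : ℝ => t ^ s * (t * q + (1 - t) * p) * A) volume 0 1 ∧
      IntervalIntegrable (fun t : ℝ => (1 - t) ^ s * (t * q + (1 - t) * p) * B) volume 0 1 := by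
  have h1 : IntervalIntegrable (fun t : ℝ => (1 - t) ^ s) volume 0 1 := by
    simpa using (intervalIntegrable_rpow' hs (a := 1) (b := 0)).comp_sub_left 1
  exact ⟨((intervalIntegrable_rpow' hs).mul_continuousOn (by fun_prop)).mul_const A,
    (h1.mul_continuousOn (by fun_prop)).mul_const B⟩

theorem integral_affine_mul_rpow_add_one_sub_rpow {s : ℝ} (hs : -1 < s) (p q A B : ℝ) :
    ∫ t in (0:ℝ)..1, (t * q + (1 - t) * p) * (t ^ s * A + (1 - t) ^ s * B)
      = (((s + 1) * q + p) * A + ((s + 1) * p + q) * B) / ((s + 1) * (s + 2)) := by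
  obtain ⟨h0, h1⟩ := intervalIntegrable_rpow_affine_mul hs p q A B
  have hsplit : (fun t : ℝ => (t * q + (1 - t) * p) * (t ^ s * A + (1 - t) ^ s * B))
      = fun t => t ^ s * (t * q + (1 - t) * p) * A + (1 - t) ^ s * (t * q + (1 - t) * p) * B := by
    ext t; ring
  rw [hsplit, integral_add h0 h1, intervalIntegral.integral_mul_const,
    intervalIntegral.integral_mul_const, integral_rpow_mul_affine hs,
    integral_one_sub_rpow_mul_affine hs]
  ring

theorem abs_integral_affine_mul_comp_le {g : ℝ → ℝ} {s c d p q : ℝ} (hs : -1 < s)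
    (hp : 0 ≤ p) (hq : 0 ≤ q)
    (hg : ∀ t ∈ Icc (0:ℝ) 1, |g (t * d + (1 - t) * c)| ≤ t ^ s * |g d| + (1 - t) ^ s * |g c|) :
    |∫ t in (0:ℝ)..1, (t * q + (1 - t) * p) * g (t * d + (1 - t) * c)|
      ≤ (((s + 1) * q + p) * |g d| + ((s + 1) * p + q) * |g c|) / ((s + 1) * (s + 2)) := by
  obtain ⟨h0, h1⟩ := intervalIntegrable_rpow_affine_mul hs p q |g d| |g c|
  rw [← integral_affine_mul_rpow_add_one_sub_rpow hs, ← Real.norm_eq_abs]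
  refine norm_integral_le_of_norm_le zero_le_one (ae_of_all _ fun t ht => ?_)
    ((h0.add h1).congr fun t _ => by ring)
  have ht' : t ∈ Icc (0:ℝ) 1 := Ioc_subset_Icc_self ht
  have hk : 0 ≤ t * q + (1 - t) * p := by nlinarith [ht'.1, ht'.2]
  rw [Real.norm_eq_abs, abs_mul, abs_of_nonneg hk]
  exact mul_le_mul_of_nonneg_left (hg t ht') hk

theorem integral_affine_mul_deriv_comp {f f' : ℝ → ℝ} {c d : ℝ} (p q : ℝ) (hcd : c ≠ d)
    (hf : ∀ x ∈ uIcc c d, HasDerivAt f (f' x) x) (hf' : IntervalIntegrable f' volume c d) :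
    ∫ t in (0:ℝ)..1, (t * q + (1 - t) * p) * f' (t * d + (1 - t) * c)
      = (q * f d - p * f c) / (d - c) - (q - p) / (d - c) ^ 2 * ∫ x in c..d, f x := by
  have hdc : d - c ≠ 0 := sub_ne_zero.mpr hcd.symm
  -- After `x = c + (d - c) t`, the weight becomes the affine `k` with `k c = p`, `k d = q`.
  have hk : ∀ x ∈ uIcc c d,
      HasDerivAt (fun x => p + (q - p) / (d - c) * (x - c)) ((q - p) / (d - c)) x := fun x _ => by
    simpa using ((hasDerivAt_id x).sub_const c).const_mul ((q - p) / (d - c)) |>.const_add p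
  have hibp := integral_mul_deriv_eq_deriv_mul hk hf intervalIntegrable_const hf'
  have hsubst := integral_comp_add_mul
    (fun x => (p + (q - p) / (d - c) * (x - c)) * f' x) hdc c (a := 0) (b := 1)
  simp only [mul_zero, add_zero, mul_one, add_sub_cancel, smul_eq_mul] at hsubst
  have hintegrand : ∀ t : ℝ, (t * q + (1 - t) * p) * f' (t * d + (1 - t) * c)
      = (p + (q - p) / (d - c) * (c + (d - c) * t - c)) * f' (c + (d - c) * t) := fun t => by
    rw [show t * d + (1 - t) * c = c + (d - c) * t by ring]
    field_simp
    ring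
  simp only [hintegrand, hsubst, hibp, intervalIntegral.integral_const_mul, sub_self, mul_zero,
    add_zero, div_mul_cancel₀ _ hdc]
  field_simp
  ring

theorem midpoint_trapezoid_error_eq {f f' : ℝ → ℝ} {u v : ℝ} (huv : u < v)
    (hf : ∀ x ∈ uIcc u v, HasDerivAt f (f' x) x) (hf' : IntervalIntegrable f' volume u v) :
    (v * f v - u * f u) / (2 * (v - u)) + (1 / 2) * f ((u + v) / 2)
        - (1 / (v - u)) * ∫ x in u..v, f x
      = ((∫ t in (0:ℝ)..1, (t * v + (1 - t) * u) * f' (t * ((u + v) / 2) + (1 - t) * u))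
        + ∫ t in (0:ℝ)..1, (t * v + (1 - t) * u) * f' (t * v + (1 - t) * ((u + v) / 2))) / 4 := by
  set m := (u + v) / 2 with hm_def
  have hum : u < m := by linarith
  have hmv : m < v := by linarith
  have hm : m ∈ uIcc u v := by rw [uIcc_of_le huv.le]; exact ⟨hum.le, hmv.le⟩
  have hsub₁ : uIcc u m ⊆ uIcc u v := uIcc_subset_uIcc left_mem_uIcc hm
  have hsub₂ : uIcc m v ⊆ uIcc u v := uIcc_subset_uIcc hm right_mem_uIcc
  have hf_int : IntervalIntegrable f volume u v :=
    ContinuousOn.intervalIntegrable fun x hx => (hf x hx).continuousAt.continuousWithinAt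
  rw [integral_affine_mul_deriv_comp u v hum.ne (fun x hx => hf x (hsub₁ hx))
      (hf'.mono_set hsub₁),
    integral_affine_mul_deriv_comp u v hmv.ne (fun x hx => hf x (hsub₂ hx))
      (hf'.mono_set hsub₂),
    ← integral_add_adjacent_intervals (hf_int.mono_set hsub₁) (hf_int.mono_set hsub₂),
    show m - u = (v - u) / 2 by ring, show v - m = (v - u) / 2 by ring]
  field_simp [(sub_pos.2 huv).ne']
  ring

theorem stmt_3_general (f f' : ℝ → ℝ) (u v s : ℝ) (hu : 0 < u) (huv : u < v)
    (hs0 : 0 < s)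
    (hderiv : ∀ y ∈ interior (Set.Ici (0:ℝ)), HasDerivAt f (f' y) y)
    (hint : IntervalIntegrable f' MeasureTheory.volume u v)
    (hsconv : ∀ a ∈ Set.Icc u v, ∀ b ∈ Set.Icc u v, ∀ t ∈ Set.Icc (0:ℝ) 1,
      |f' (t * a + (1 - t) * b)| ≤ t ^ s * |f' a| + (1 - t) ^ s * |f' b|) :
    |(v * f v - u * f u) / (2 * (v - u)) + (1 / 2) * f ((u + v) / 2)
        - (1 / (v - u)) * ∫ μ in u..v, f μ|
      ≤ (1 / 4) *
          ((((s + 1) * u + v) * |f' ((u + v) / 2)| + (u + (s + 1) * v) * |f' v|)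
            / ((s + 1) * (s + 2)))
        + (1 / 4) *
          (((u + (s + 1) * v) * |f' ((u + v) / 2)| + ((s + 1) * u + v) * |f' u|)
            / ((s + 1) * (s + 2))) := by
  have hD : ∀ x ∈ uIcc u v, HasDerivAt f (f' x) x := fun x hx => by
    rw [uIcc_of_le huv.le] at hx
    exact hderiv x (by rw [interior_Ici]; exact hu.trans_le hx.1)
  rw [midpoint_trapezoid_error_eq huv hD hint]
  set m := (u + v) / 2 with hm_def
  have hm : m ∈ Icc u v := by constructor <;> linarith
  have hB₁ := abs_integral_affine_mul_comp_le (g := f') (c := u) (p := u) (q := v) (by linarith)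
    hu.le (by linarith) fun t ht => hsconv m hm u (left_mem_Icc.2 huv.le) t ht
  have hB₂ := abs_integral_affine_mul_comp_le (g := f') (d := v) (p := u) (q := v) (by linarith)
    hu.le (by linarith) fun t ht => hsconv v (right_mem_Icc.2 huv.le) m hm t ht
  calc _ ≤ (|∫ t in (0:ℝ)..1, (t * v + (1 - t) * u) * f' (t * m + (1 - t) * u)|
          + |∫ t in (0:ℝ)..1, (t * v + (1 - t) * u) * f' (t * v + (1 - t) * m)|) / 4 := by
        rw [abs_div, abs_of_pos (by norm_num : (0:ℝ) < 4)]; gcongr; exact abs_add_le _ _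
    _ ≤ ((((s + 1) * v + u) * |f' m| + ((s + 1) * u + v) * |f' u|) / ((s + 1) * (s + 2))
          + (((s + 1) * v + u) * |f' v| + ((s + 1) * u + v) * |f' m|) / ((s + 1) * (s + 2)))
          / 4 := by gcongr
    _ = _ := by ring

theorem stmt_3 (f f' : ℝ → ℝ) (u v s : ℝ) (hu : 0 < u) (huv : u < v)
    (hs0 : 0 < s) (hs1 : s ≤ 1)
    (hderiv : ∀ y ∈ interior (Set.Ici (0:ℝ)), HasDerivAt f (f' y) y)
    (hint : IntervalIntegrable f' MeasureTheory.volume u v)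
    (hsconv : ∀ a ∈ Set.Icc u v, ∀ b ∈ Set.Icc u v, ∀ t ∈ Set.Icc (0:ℝ) 1,
      |f' (t * a + (1 - t) * b)| ≤ t ^ s * |f' a| + (1 - t) ^ s * |f' b|) :
    |(v * f v - u * f u) / (2 * (v - u)) + (1 / 2) * f ((u + v) / 2)
        - (1 / (v - u)) * ∫ μ in u..v, f μ|
      ≤ (1 / 4) *
          ((((s + 1) * u + v) * |f' ((u + v) / 2)| + (u + (s + 1) * v) * |f' v|)
            / ((s + 1) * (s + 2)))
        + (1 / 4) *
          (((u + (s + 1) * v) * |f' ((u + v) / 2)| + ((s + 1) * u + v) * |f' u|)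
            / ((s + 1) * (s + 2))) :=
  stmt_3_general f f' u v s hu huv hs0 hderiv hint hsconv
end

section
/- Let J = [0,∞) and let f : J → ℝ be differentiable on the interior of J with f' integrable on [u,v], where u, v ∈ J and 0 < u < v. If |f'| is s-convex in the second sense on [u,v] for some fixed s ∈ (0,1] and |f'(x)| ≤ M for all x ∈ [u,v], then |(v·f(v) - u·f(u))/(2(v-u)) + (1/2)·f((u+v)/2) - (1/(v-u))·∫_u^v f(μ) dμ| ≤ M·(u+v)/(2(s+1)). -/
/-!
Integrating by parts against the kernel `x - u/2` on `[u, m]` and `x - v/2` on `[m, v]`,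
`m = (u + v)/2`, turns `(v - u)` times the expression into `∫ K f'`. The kernel is nonnegative
with `∫ K = (v² - u²)/4`, so `|f'| ≤ M` bounds the expression by `M (u + v)/4`, which is at most
`M (u + v)/(2(s + 1))` because `s ≤ 1`.
-/

open intervalIntegral MeasureTheory Set
open scoped Interval

theorem integral_sub_const_mul_deriv {f f' : ℝ → ℝ} {a b : ℝ} (c : ℝ)
    (hf : ∀ x ∈ [[a, b]], HasDerivAt f (f' x) x) (hf' : IntervalIntegrable f' volume a b) :
    ∫ x in a..b, (x - c) * f' x = (b - c) * f b - (a - c) * f a - ∫ x in a..b, f x := by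
  simpa using integral_mul_deriv_eq_deriv_mul (fun x _ => (hasDerivAt_id x).sub_const c) hf
    intervalIntegrable_const hf'

theorem abs_integral_sub_const_mul_le {g : ℝ → ℝ} {a b c M : ℝ} (hca : c ≤ a) (hab : a ≤ b)
    (hg : ∀ x ∈ Ioc a b, |g x| ≤ M) :
    |∫ x in a..b, (x - c) * g x| ≤ M * ((b - c) ^ 2 - (a - c) ^ 2) / 2 := by
  have hle : ∀ x ∈ Ioc a b, ‖(x - c) * g x‖ ≤ M * (x - c) := fun x hx => by
    have hxc : 0 ≤ x - c := by linarith [hx.1]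
    rw [Real.norm_eq_abs, abs_mul, abs_of_nonneg hxc, mul_comm M]
    exact mul_le_mul_of_nonneg_left (hg x hx) hxc
  calc |∫ x in a..b, (x - c) * g x| ≤ ∫ x in a..b, M * (x - c) :=
        intervalIntegral.norm_integral_le_of_norm_le hab (ae_of_all _ hle)
        ((by fun_prop : Continuous fun x => M * (x - c)).intervalIntegrable a b)
    _ = M * ((b - c) ^ 2 - (a - c) ^ 2) / 2 := by
        rw [intervalIntegral.integral_const_mul, integral_comp_sub_right (fun x => x), integral_id]
        ring

theorem endpoints_add_midpoint_sub_integral_eq {f f' : ℝ → ℝ} {u v : ℝ}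
    (hf : ∀ x ∈ [[u, v]], HasDerivAt f (f' x) x) (hf' : IntervalIntegrable f' volume u v) :
    (v * f v - u * f u) / 2 + (v - u) / 2 * f ((u + v) / 2) - ∫ x in u..v, f x =
      (∫ x in u..(u + v) / 2, (x - u / 2) * f' x) + ∫ x in (u + v) / 2..v, (x - v / 2) * f' x := by
  have hm : (u + v) / 2 ∈ [[u, v]] := by
    rcases le_total u v with h | h
    · rw [uIcc_of_le h]; constructor <;> linarith
    · rw [uIcc_of_ge h]; constructor <;> linarith
  have h₁ : [[u, (u + v) / 2]] ⊆ [[u, v]] := uIcc_subset_uIcc_left hm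
  have h₂ : [[(u + v) / 2, v]] ⊆ [[u, v]] := uIcc_subset_uIcc_right hm
  have hfc : ContinuousOn f [[u, v]] := fun x hx => (hf x hx).continuousAt.continuousWithinAt
  rw [integral_sub_const_mul_deriv _ (fun x hx => hf x (h₁ hx)) (hf'.mono_set h₁),
    integral_sub_const_mul_deriv _ (fun x hx => hf x (h₂ hx)) (hf'.mono_set h₂),
    ← integral_add_adjacent_intervals (hfc.mono h₁).intervalIntegrable
      (hfc.mono h₂).intervalIntegrable]
  ring

theorem stmt_5_general (f f' : ℝ → ℝ) (u v s M : ℝ) (hu : 0 < u) (huv : u < v)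
    (hs0 : 0 < s) (hs1 : s ≤ 1) (hM : 0 ≤ M)
    (hderiv : ∀ y ∈ interior (Set.Ici (0:ℝ)), HasDerivAt f (f' y) y)
    (hint : IntervalIntegrable f' MeasureTheory.volume u v)
    (hbound : ∀ x ∈ Set.Icc u v, |f' x| ≤ M) :
    |(v * f v - u * f u) / (2 * (v - u)) + (1 / 2) * f ((u + v) / 2)
        - (1 / (v - u)) * ∫ μ in u..v, f μ|
      ≤ M * (u + v) / (2 * (s + 1)) := by
  have hvu : 0 < v - u := sub_pos.2 huv
  have hd : ∀ x ∈ [[u, v]], HasDerivAt f (f' x) x := fun x hx => by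
    rw [uIcc_of_le huv.le] at hx
    exact hderiv x (by rw [interior_Ici]; exact hu.trans_le hx.1)
  have h₁ := abs_integral_sub_const_mul_le (g := f') (c := u / 2) (a := u) (b := (u + v) / 2)
    (by linarith) (by linarith) fun x hx => hbound x ⟨hx.1.le, by linarith [hx.2]⟩
  have h₂ := abs_integral_sub_const_mul_le (g := f') (c := v / 2) (a := (u + v) / 2) (b := v)
    (by linarith) (by linarith) fun x hx => hbound x ⟨by linarith [hx.1], hx.2⟩
  have hE := endpoints_add_midpoint_sub_integral_eq hd hint
  set I₁ := ∫ x in u..(u + v) / 2, (x - u / 2) * f' x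
  set I₂ := ∫ x in (u + v) / 2..v, (x - v / 2) * f' x
  have hexpr : (v * f v - u * f u) / (2 * (v - u)) + (1 / 2) * f ((u + v) / 2)
      - (1 / (v - u)) * ∫ μ in u..v, f μ = (I₁ + I₂) / (v - u) := by
    rw [← hE]; field_simp
  rw [hexpr, abs_div, abs_of_pos hvu, div_le_iff₀ hvu]
  calc |I₁ + I₂| ≤ |I₁| + |I₂| := abs_add_le _ _
    _ ≤ M * (u + v) / 4 * (v - u) := by linarith
    _ ≤ M * (u + v) / (2 * (s + 1)) * (v - u) := by
        have : 0 ≤ M * (u + v) := mul_nonneg hM (by linarith)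
        gcongr; linarith

theorem stmt_5 (f f' : ℝ → ℝ) (u v s M : ℝ) (hu : 0 < u) (huv : u < v)
    (hs0 : 0 < s) (hs1 : s ≤ 1) (hM : 0 ≤ M)
    (hderiv : ∀ y ∈ interior (Set.Ici (0:ℝ)), HasDerivAt f (f' y) y)
    (hint : IntervalIntegrable f' MeasureTheory.volume u v)
    (hsconv : ∀ a ∈ Set.Icc u v, ∀ b ∈ Set.Icc u v, ∀ t ∈ Set.Icc (0:ℝ) 1,
      |f' (t * a + (1 - t) * b)| ≤ t ^ s * |f' a| + (1 - t) ^ s * |f' b|)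
    (hbound : ∀ x ∈ Set.Icc u v, |f' x| ≤ M) :
    |(v * f v - u * f u) / (2 * (v - u)) + (1 / 2) * f ((u + v) / 2)
        - (1 / (v - u)) * ∫ μ in u..v, f μ|
      ≤ M * (u + v) / (2 * (s + 1)) :=
  stmt_5_general f f' u v s M hu huv hs0 hs1 hM hderiv hint hbound
end

section
/- Let J = [0,∞) and let f : J → ℝ be differentiable on the interior of J with f' integrable on [u,v], where u, v ∈ J and 0 < u < v. Let q > 1 and p satisfy 1/p + 1/q = 1. If |f'|^q is convex on [u,v], then for every x ∈ [u,v]: |((v-x)(v·f(v) - u·f(x)) + (x-u)(v·f(x) - u·f(u)))/(v-u)² - (1/(v-u))·∫_u^v f(μ) dμ| ≤ ((v-x)²/(v-u)²)·L_p(u,v)·((|f'(x)|^q + |f'(v)|^q)/2)^{1/q} + ((x-u)²/(v-u)²)·L_p(u,v)·((|f'(x)|^q + |f'(u)|^q)/2)^{1/q}. -/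
/-!
Integrating by parts against the affine weight `affineWeight u v a b`, whose slope `(v - u)⁻¹`
does not depend on `a` and `b`, on `[u, x]` and on `[x, v]` writes the quantity on the left as
the sum of two integrals of `f'` against such weights, each estimated by Hölder's inequality. The weight is a rescaled
copy of the identity of `[u, v]`, so its `p`-th moment is a multiple of `L_p(u, v) ^ p`; and
the `q`-th moment of `f'` is controlled by the right half of the Hermite–Hadamard inequality
for the convex function `|f'| ^ q`.
-/

open MeasureTheory Set

theorem ConvexOn.integral_le_sub_mul_endpoint_avg {g : ℝ → ℝ} {a b : ℝ} (hab : a ≤ b)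
    (hg : ConvexOn ℝ (Icc a b) g) (hgi : IntervalIntegrable g volume a b) :
    ∫ x in a..b, g x ≤ (b - a) * ((g a + g b) / 2) := by
  rcases hab.eq_or_lt with rfl | hab
  · simp
  have ha : a ∈ Icc a b := left_mem_Icc.2 hab.le
  have hb : b ∈ Icc a b := right_mem_Icc.2 hab.le
  have hsecant : ∀ x ∈ Icc a b, (b - a) * g x ≤ (b - x) * g a + (x - a) * g b := by
    rintro x ⟨hax, hxb⟩
    rcases hax.eq_or_lt with rfl | hax
    · linarith
    rcases hxb.eq_or_lt with rfl | hxb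
    · linarith
    exact hg.secant_mono_aux1 ha hb hax hxb
  have hint : (b - a) * ∫ x in a..b, g x ≤ ∫ x in a..b, ((b - x) * g a + (x - a) * g b) := by
    rw [← intervalIntegral.integral_const_mul]
    exact intervalIntegral.integral_mono_on hab.le (hgi.const_mul _)
      (by apply Continuous.intervalIntegrable; fun_prop) hsecant
  have hlin : ∫ x in a..b, ((b - x) * g a + (x - a) * g b)
      = (b - a) * ((b - a) * ((g a + g b) / 2)) := by
    rw [intervalIntegral.integral_add (by apply Continuous.intervalIntegrable; fun_prop)
      (by apply Continuous.intervalIntegrable; fun_prop)]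
    simp only [intervalIntegral.integral_mul_const, intervalIntegral.integral_const, smul_eq_mul,
      integral_id, intervalIntegral.integral_sub intervalIntegrable_const
        intervalIntegral.intervalIntegrable_id,
      intervalIntegral.integral_sub intervalIntegral.intervalIntegrable_id
        intervalIntegrable_const]
    ring
  exact le_of_mul_le_mul_left (hint.trans_eq hlin) (sub_pos.2 hab)

theorem memLp_of_intervalIntegrable_rpow {p a b : ℝ} (hp : 0 < p) {f : ℝ → ℝ}
    (hf0 : ∀ x ∈ Ioc a b, 0 ≤ f x) (hf : AEStronglyMeasurable f (volume.restrict (Ioc a b)))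
    (hfp : IntervalIntegrable (fun x ↦ f x ^ p) volume a b) :
    MemLp f (ENNReal.ofReal p) (volume.restrict (Ioc a b)) := by
  refine (integrable_norm_rpow_iff hf (by simpa using hp) ENNReal.ofReal_ne_top).1 ?_
  rw [ENNReal.toReal_ofReal hp.le]
  refine hfp.1.congr ((ae_restrict_iff' measurableSet_Ioc).2 (Filter.Eventually.of_forall ?_))
  intro x hx
  simp only [Real.norm_of_nonneg (hf0 x hx)]

theorem intervalIntegral_mul_le_Lp_mul_Lq_of_nonneg {p q : ℝ} (hpq : p.HolderConjugate q)
    {a b : ℝ} (hab : a ≤ b) {f g : ℝ → ℝ} (hf0 : ∀ x ∈ Ioc a b, 0 ≤ f x)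
    (hg0 : ∀ x ∈ Ioc a b, 0 ≤ g x) (hf : AEStronglyMeasurable f (volume.restrict (Ioc a b)))
    (hg : AEStronglyMeasurable g (volume.restrict (Ioc a b)))
    (hfp : IntervalIntegrable (fun x ↦ f x ^ p) volume a b)
    (hgq : IntervalIntegrable (fun x ↦ g x ^ q) volume a b) :
    ∫ x in a..b, f x * g x
      ≤ (∫ x in a..b, f x ^ p) ^ (1 / p) * (∫ x in a..b, g x ^ q) ^ (1 / q) := by
  simp only [intervalIntegral.integral_of_le hab]
  exact integral_mul_le_Lp_mul_Lq_of_nonneg hpq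
    ((ae_restrict_iff' measurableSet_Ioc).2 (Filter.Eventually.of_forall hf0))
    ((ae_restrict_iff' measurableSet_Ioc).2 (Filter.Eventually.of_forall hg0))
    (memLp_of_intervalIntegrable_rpow hpq.pos hf0 hf hfp)
    (memLp_of_intervalIntegrable_rpow hpq.symm.pos hg0 hg hgq)

theorem ConvexOn.intervalIntegrable_of_nonneg {h : ℝ → ℝ} {a b : ℝ} (hab : a ≤ b)
    (hh : ConvexOn ℝ (Icc a b) h) (h0 : ∀ x ∈ Icc a b, 0 ≤ h x)
    (hm : AEStronglyMeasurable h (volume.restrict (Ioc a b))) :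
    IntervalIntegrable h volume a b := by
  rw [intervalIntegrable_iff_integrableOn_Ioc_of_le hab]
  refine Integrable.of_bound hm (max (h a) (h b))
    ((ae_restrict_iff' measurableSet_Ioc).2 (Filter.Eventually.of_forall fun x hx ↦ ?_))
  have hx := Ioc_subset_Icc_self hx
  rw [Real.norm_of_nonneg (h0 x hx)]
  exact hh.le_max_of_mem_Icc (left_mem_Icc.2 hab) (right_mem_Icc.2 hab) hx

noncomputable def generalizedLogMean (p u v : ℝ) : ℝ :=
  ((v ^ (p + 1) - u ^ (p + 1)) / ((p + 1) * (v - u))) ^ (1 / p)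

/-- `(b - a) / (v - u) ^ 2` times the increasing affine bijection of `[a, b]` onto `[u, v]`. -/
noncomputable def affineWeight (u v a b μ : ℝ) : ℝ :=
  ((b - a) * u + (μ - a) * (v - u)) / (v - u) ^ 2

section affineWeight

variable {u v a b : ℝ}

theorem affineWeight_eq_inv_mul_add (μ : ℝ) :
    affineWeight u v a b μ = (v - u)⁻¹ * μ + ((b - a) * u - a * (v - u)) / (v - u) ^ 2 := by
  unfold affineWeight
  rcases eq_or_ne (v - u) 0 with h | h
  · simp [h]
  · field_simp
    ring

theorem hasDerivAt_affineWeight (μ : ℝ) : HasDerivAt (affineWeight u v a b) (v - u)⁻¹ μ := by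
  have h := ((hasDerivAt_id μ).const_mul (v - u)⁻¹).add_const
    (((b - a) * u - a * (v - u)) / (v - u) ^ 2)
  rw [mul_one] at h
  exact h.congr_of_eventuallyEq (Filter.Eventually.of_forall affineWeight_eq_inv_mul_add)

theorem affineWeight_nonneg (hu : 0 ≤ u) (huv : u ≤ v) (hab : a ≤ b) {μ : ℝ}
    (hμ : a ≤ μ) :
    0 ≤ affineWeight u v a b μ := by
  unfold affineWeight
  have := mul_nonneg (sub_nonneg.2 hab) hu
  have := mul_nonneg (sub_nonneg.2 hμ) (sub_nonneg.2 huv)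
  positivity

theorem integral_affineWeight_mul_deriv {f f' : ℝ → ℝ}
    (hf : ∀ y ∈ uIcc a b, HasDerivAt f (f' y) y) (hf' : IntervalIntegrable f' volume a b) :
    ∫ μ in a..b, affineWeight u v a b μ * f' μ
      = (b - a) * (v * f b - u * f a) / (v - u) ^ 2 - (v - u)⁻¹ * ∫ μ in a..b, f μ := by
  rw [intervalIntegral.integral_mul_deriv_eq_deriv_mul (fun μ _ ↦ hasDerivAt_affineWeight μ) hf
    intervalIntegrable_const hf', intervalIntegral.integral_const_mul]
  unfold affineWeight
  ring

theorem integral_affineWeight_rpow (hu : 0 ≤ u) (huv : u < v) (hab : a ≤ b) {p : ℝ}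
    (hp : -1 < p) :
    ∫ μ in a..b, affineWeight u v a b μ ^ p
      = (b - a) * ((b - a) / (v - u) ^ 2) ^ p *
          ((v ^ (p + 1) - u ^ (p + 1)) / ((p + 1) * (v - u))) := by
  set lam := (b - a) / (v - u) ^ 2
  have hvu : v - u ≠ 0 := (sub_pos.2 huv).ne'
  have hlam : 0 ≤ lam := div_nonneg (sub_nonneg.2 hab) (sq_nonneg _)
  have ha : (v - u)⁻¹ * a + ((b - a) * u - a * (v - u)) / (v - u) ^ 2 = lam * u := by
    simp only [lam]; field_simp; ring
  have hb : (v - u)⁻¹ * b + ((b - a) * u - a * (v - u)) / (v - u) ^ 2 = lam * v := by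
    simp only [lam]; field_simp; ring
  simp only [affineWeight_eq_inv_mul_add]
  rw [intervalIntegral.integral_comp_mul_add (fun s ↦ s ^ p) (inv_ne_zero hvu), ha, hb,
    integral_rpow (Or.inl hp), Real.mul_rpow hlam (hu.trans huv.le), Real.mul_rpow hlam hu,
    Real.rpow_add' hlam (by linarith), Real.rpow_one, inv_inv, smul_eq_mul]
  have hp1 : p + 1 ≠ 0 := by linarith
  simp only [lam]
  field_simp


theorem abs_integral_affineWeight_mul_le {p q : ℝ} (hpq : p.HolderConjugate q) (hu : 0 ≤ u)
    (huv : u < v) (hab : a ≤ b) {g : ℝ → ℝ}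
    (hg : AEStronglyMeasurable g (volume.restrict (Ioc a b)))
    (hconv : ConvexOn ℝ (Icc a b) fun μ ↦ |g μ| ^ q) :
    |∫ μ in a..b, affineWeight u v a b μ * g μ|
      ≤ (b - a) ^ 2 / (v - u) ^ 2 * generalizedLogMean p u v *
          ((|g a| ^ q + |g b| ^ q) / 2) ^ (1 / q) := by
  set M := (v ^ (p + 1) - u ^ (p + 1)) / ((p + 1) * (v - u))
  set lam := (b - a) / (v - u) ^ 2
  set C := (|g a| ^ q + |g b| ^ q) / 2
  have hK0 : ∀ μ ∈ Icc a b, 0 ≤ affineWeight u v a b μ :=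
    fun μ hμ ↦ affineWeight_nonneg hu huv.le hab hμ.1
  have hKcont : Continuous (affineWeight u v a b) :=
    continuous_iff_continuousAt.2 fun μ ↦ (hasDerivAt_affineWeight μ).continuousAt
  have hgq : IntervalIntegrable (fun μ ↦ |g μ| ^ q) volume a b :=
    hconv.intervalIntegrable_of_nonneg hab (fun _ _ ↦ by positivity)
      ((continuous_abs.rpow_const fun _ ↦ Or.inr hpq.symm.nonneg).comp_aestronglyMeasurable hg)
  have hM0 : 0 ≤ M := by
    have := Real.rpow_le_rpow hu huv.le (by linarith [hpq.pos] : 0 ≤ p + 1)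
    have := hpq.pos
    have := sub_pos.2 huv
    exact div_nonneg (by linarith) (by positivity)
  have hlam0 : 0 ≤ lam := div_nonneg (sub_nonneg.2 hab) (sq_nonneg _)
  calc |∫ μ in a..b, affineWeight u v a b μ * g μ|
      ≤ ∫ μ in a..b, |affineWeight u v a b μ * g μ| :=
        intervalIntegral.abs_integral_le_integral_abs hab
    _ = ∫ μ in a..b, affineWeight u v a b μ * |g μ| := by
        refine intervalIntegral.integral_congr fun μ hμ ↦ ?_
        rw [uIcc_of_le hab] at hμ
        simp only [abs_mul, abs_of_nonneg (hK0 μ hμ)]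
    _ ≤ (∫ μ in a..b, affineWeight u v a b μ ^ p) ^ (1 / p) *
          (∫ μ in a..b, |g μ| ^ q) ^ (1 / q) :=
        intervalIntegral_mul_le_Lp_mul_Lq_of_nonneg hpq hab
          (fun μ hμ ↦ hK0 μ (Ioc_subset_Icc_self hμ)) (fun _ _ ↦ abs_nonneg _)
          hKcont.aestronglyMeasurable (continuous_abs.comp_aestronglyMeasurable hg)
          ((hKcont.rpow_const fun _ ↦ Or.inr hpq.nonneg).intervalIntegrable _ _) hgq
    _ ≤ ((b - a) * lam ^ p * M) ^ (1 / p) * ((b - a) * C) ^ (1 / q) := by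
        rw [integral_affineWeight_rpow hu huv hab (by linarith [hpq.pos])]
        gcongr
        · exact intervalIntegral.integral_nonneg hab fun _ _ ↦ by positivity
        · exact hpq.symm.one_div_nonneg
        · exact hconv.integral_le_sub_mul_endpoint_avg hab hgq
    _ = (b - a) ^ 2 / (v - u) ^ 2 * M ^ (1 / p) * C ^ (1 / q) := by
        have hba := sub_nonneg.2 hab
        rw [Real.mul_rpow (by positivity) hM0, Real.mul_rpow hba (by positivity),
          Real.mul_rpow hba (by positivity), one_div p, Real.rpow_rpow_inv hlam0 hpq.ne_zero,
          ← one_div]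
        have hsum : (b - a) ^ (1 / p) * (b - a) ^ (1 / q) = b - a := by
          rw [← Real.rpow_add' hba (by simp [hpq.inv_add_inv_eq_one]), hpq.one_div_add_one_div,
            div_one, Real.rpow_one]
        simp only [lam]
        linear_combination (M ^ (1 / p) * C ^ (1 / q) * (b - a) / (v - u) ^ 2) * hsum

end affineWeight

theorem sub_integral_eq_integral_affineWeight_mul_deriv {f f' : ℝ → ℝ} {u v x : ℝ}
    (hx : x ∈ Icc u v) (hf : ∀ y ∈ Icc u v, HasDerivAt f (f' y) y)
    (hf' : IntervalIntegrable f' volume u v) :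
    ((v - x) * (v * f v - u * f x) + (x - u) * (v * f x - u * f u)) / (v - u) ^ 2
        - (1 / (v - u)) * ∫ μ in u..v, f μ
      = (∫ μ in u..x, affineWeight u v u x μ * f' μ)
          + ∫ μ in x..v, affineWeight u v x v μ * f' μ := by
  have hu : u ∈ Icc u v := ⟨le_rfl, hx.1.trans hx.2⟩
  have hv : v ∈ Icc u v := ⟨hx.1.trans hx.2, le_rfl⟩
  have hsub : ∀ {a b}, a ∈ Icc u v → b ∈ Icc u v → uIcc a b ⊆ uIcc u v :=
    fun ha hb ↦ uIcc_subset_uIcc (Icc_subset_uIcc ha) (Icc_subset_uIcc hb)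
  have hfi : IntervalIntegrable f volume u v :=
    ContinuousOn.intervalIntegrable fun y hy ↦
      (hf y (uIcc_of_le (hx.1.trans hx.2) ▸ hy)).continuousAt.continuousWithinAt
  have hderiv : ∀ {a b}, a ∈ Icc u v → b ∈ Icc u v →
      ∀ y ∈ uIcc a b, HasDerivAt f (f' y) y :=
    fun ha hb y hy ↦ hf y (uIcc_subset_Icc ha hb hy)
  rw [integral_affineWeight_mul_deriv (hderiv hu hx) (hf'.mono_set (hsub hu hx)),
    integral_affineWeight_mul_deriv (hderiv hx hv) (hf'.mono_set (hsub hx hv)),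
    ← intervalIntegral.integral_add_adjacent_intervals (hfi.mono_set (hsub hu hx))
      (hfi.mono_set (hsub hx hv))]
  ring

theorem stmt_6 (f f' : ℝ → ℝ) (u v p q : ℝ) (hu : 0 < u) (huv : u < v)
    (hq : 1 < q) (hpq : 1 / p + 1 / q = 1)
    (hderiv : ∀ y ∈ interior (Set.Ici (0:ℝ)), HasDerivAt f (f' y) y)
    (hint : IntervalIntegrable f' MeasureTheory.volume u v)
    (hconv : ∀ a ∈ Set.Icc u v, ∀ b ∈ Set.Icc u v, ∀ t ∈ Set.Icc (0:ℝ) 1,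
      |f' (t * a + (1 - t) * b)| ^ q ≤ t * |f' a| ^ q + (1 - t) * |f' b| ^ q)
    (x : ℝ) (hx : x ∈ Set.Icc u v) :
    |((v - x) * (v * f v - u * f x) + (x - u) * (v * f x - u * f u)) / (v - u) ^ 2
        - (1 / (v - u)) * ∫ μ in u..v, f μ|
      ≤ ((v - x) ^ 2 / (v - u) ^ 2) *
          ((v ^ (p + 1) - u ^ (p + 1)) / ((p + 1) * (v - u))) ^ (1 / p) *
          ((|f' x| ^ q + |f' v| ^ q) / 2) ^ (1 / q)
        + ((x - u) ^ 2 / (v - u) ^ 2) *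
          ((v ^ (p + 1) - u ^ (p + 1)) / ((p + 1) * (v - u))) ^ (1 / p) *
          ((|f' x| ^ q + |f' u| ^ q) / 2) ^ (1 / q) := by
  have hpq' : p.HolderConjugate q :=
    (Real.holderConjugate_iff.2 ⟨hq, by rw [← one_div, ← one_div, add_comm, hpq]⟩).symm
  have hf : ∀ y ∈ Icc u v, HasDerivAt f (f' y) y :=
    fun y hy ↦ hderiv y (by rw [interior_Ici]; exact hu.trans_le hy.1)
  have hconvOn : ConvexOn ℝ (Icc u v) fun y ↦ |f' y| ^ q := by
    refine ⟨convex_Icc u v, fun a ha b hb s t hs ht hst ↦ ?_⟩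
    obtain rfl : t = 1 - s := by linarith
    exact hconv a ha b hb s ⟨hs, by linarith⟩
  have hleft := abs_integral_affineWeight_mul_le hpq' hu.le huv hx.1
    (hint.mono_set (uIcc_subset_uIcc_left (Icc_subset_uIcc hx))).1.aestronglyMeasurable
    (hconvOn.subset (Icc_subset_Icc le_rfl hx.2) (convex_Icc u x))
  have hright := abs_integral_affineWeight_mul_le hpq' hu.le huv hx.2
    (hint.mono_set (uIcc_subset_uIcc_right (Icc_subset_uIcc hx))).1.aestronglyMeasurable
    (hconvOn.subset (Icc_subset_Icc hx.1 le_rfl) (convex_Icc x v))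
  rw [sub_integral_eq_integral_affineWeight_mul_deriv hx hf hint]
  unfold generalizedLogMean at hleft hright
  rw [add_comm (|f' u| ^ q)] at hleft
  linarith [abs_add_le (∫ μ in u..x, affineWeight u v u x μ * f' μ)
    (∫ μ in x..v, affineWeight u v x v μ * f' μ)]
end

section
/- Let J = [0,∞) and let f : J → ℝ be differentiable on the interior of J with f' integrable on [u,v], where u, v ∈ J and 0 < u < v. Let q > 1 and p satisfy 1/p + 1/q = 1, and let s ∈ (0,1]. If |f'|^q is s-convex in the second sense on [u,v], then for every x ∈ [u,v]: |((v-x)(v·f(v) - u·f(x)) + (x-u)(v·f(x) - u·f(u)))/(v-u)² - (1/(v-u))·∫_u^v f(μ) dμ| ≤ ((v-x)²/(v-u)²)·L_p(u,v)·((|f'(x)|^q + |f'(v)|^q)/(s+1))^{1/q} + ((x-u)²/(v-u)²)·L_p(u,v)·((|f'(x)|^q + |f'(u)|^q)/(s+1))^{1/q}. -/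
/-!
Integration by parts against the kernel `σ ↦ (v - u) σ - (v x - u v)` on `[x, v]` and
`σ ↦ (v - u) σ - (v u - u x)` on `[u, x]` turns the left-hand side into `(v - u)⁻²` times the
sum of the two integrals of kernel times `f'`. On a piece `[a, b]` the kernel grows linearly
from `u (b - a)` to `v (b - a)`, so its `p`-th power integrates to `(b - a) ^ (p + 1) L_p ^ p`.
Hölder's inequality and the Hermite–Hadamard bound `∫_a^b g ≤ (b - a) (g a + g b) / (s + 1)`
for the `s`-convex function `g = |f'| ^ q` finish the estimate.
-/

open MeasureTheory Set intervalIntegral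

lemma integral_rpow_sub_left {b s : ℝ} (a : ℝ) (hs : -1 < s) :
    ∫ σ in a..b, (b - σ) ^ s = (b - a) ^ (s + 1) / (s + 1) := by
  rw [integral_comp_sub_left (fun τ => τ ^ s) b, integral_rpow (Or.inl hs), sub_self,
    Real.zero_rpow (by linarith), sub_zero]

lemma integral_rpow_sub_right {a s : ℝ} (b : ℝ) (hs : -1 < s) :
    ∫ σ in a..b, (σ - a) ^ s = (b - a) ^ (s + 1) / (s + 1) := by
  rw [integral_comp_sub_right (fun τ => τ ^ s) a, integral_rpow (Or.inl hs), sub_self,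
    Real.zero_rpow (by linarith), sub_zero]

section SConvex

variable {g : ℝ → ℝ} {a b s : ℝ}

lemma le_of_mem_Icc_of_sConvex (hab : a < b)
    (hg : ∀ t ∈ Icc (0 : ℝ) 1, g (t * a + (1 - t) * b) ≤ t ^ s * g a + (1 - t) ^ s * g b)
    {σ : ℝ} (hσ : σ ∈ Icc a b) :
    g σ ≤ ((b - σ) / (b - a)) ^ s * g a + ((σ - a) / (b - a)) ^ s * g b := by
  have hba : 0 < b - a := sub_pos.2 hab
  have ht : (b - σ) / (b - a) ∈ Icc (0 : ℝ) 1 :=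
    ⟨div_nonneg (by linarith [hσ.2]) hba.le, (div_le_one hba).2 (by linarith [hσ.1])⟩
  have h1t : 1 - (b - σ) / (b - a) = (σ - a) / (b - a) := by field_simp; ring
  have hcomb : (b - σ) / (b - a) * a + (1 - (b - σ) / (b - a)) * b = σ := by field_simp; ring
  have h := hg _ ht
  rwa [hcomb, h1t] at h

lemma le_add_of_sConvex (hab : a < b) (hs : 0 ≤ s) (ha : 0 ≤ g a) (hb : 0 ≤ g b)
    (hg : ∀ t ∈ Icc (0 : ℝ) 1, g (t * a + (1 - t) * b) ≤ t ^ s * g a + (1 - t) ^ s * g b)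
    {σ : ℝ} (hσ : σ ∈ Icc a b) :
    g σ ≤ g a + g b := by
  have hba : 0 < b - a := sub_pos.2 hab
  have hl : ((b - σ) / (b - a)) ^ s ≤ 1 :=
    Real.rpow_le_one (div_nonneg (by linarith [hσ.2]) hba.le)
      ((div_le_one hba).2 (by linarith [hσ.1])) hs
  have hr : ((σ - a) / (b - a)) ^ s ≤ 1 :=
    Real.rpow_le_one (div_nonneg (by linarith [hσ.1]) hba.le)
      ((div_le_one hba).2 (by linarith [hσ.2])) hs
  calc g σ ≤ ((b - σ) / (b - a)) ^ s * g a + ((σ - a) / (b - a)) ^ s * g b :=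
        le_of_mem_Icc_of_sConvex hab hg hσ
    _ ≤ g a + g b := add_le_add (mul_le_of_le_one_left ha hl) (mul_le_of_le_one_left hb hr)

-- The right-hand Hermite–Hadamard inequality for `s`-convex functions.
lemma integral_le_of_sConvex (hab : a < b) (hs : -1 < s) (hgi : IntervalIntegrable g volume a b)
    (hg : ∀ t ∈ Icc (0 : ℝ) 1, g (t * a + (1 - t) * b) ≤ t ^ s * g a + (1 - t) ^ s * g b) :
    ∫ σ in a..b, g σ ≤ (b - a) * ((g a + g b) / (s + 1)) := by
  have hba : 0 < b - a := sub_pos.2 hab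
  have hl : IntervalIntegrable (fun σ => (b - σ) ^ s) volume a b := by
    simpa using (intervalIntegrable_rpow' hs (a := b - a) (b := b - b)).comp_sub_left b
  have hr : IntervalIntegrable (fun σ => (σ - a) ^ s) volume a b := by
    simpa using (intervalIntegrable_rpow' hs (a := a - a) (b := b - a)).comp_sub_right a
  calc ∫ σ in a..b, g σ
      ≤ ∫ σ in a..b, ((b - σ) ^ s * g a + (σ - a) ^ s * g b) / (b - a) ^ s := by
        refine integral_mono_on hab.le hgi (((hl.mul_const _).add (hr.mul_const _)).div_const _)
          fun σ hσ => (le_of_mem_Icc_of_sConvex hab hg hσ).trans_eq ?_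
        rw [Real.div_rpow (by linarith [hσ.2]) hba.le, Real.div_rpow (by linarith [hσ.1]) hba.le]
        ring
    _ = (b - a) * ((g a + g b) / (s + 1)) := by
        rw [intervalIntegral.integral_div, integral_add (hl.mul_const _) (hr.mul_const _),
          intervalIntegral.integral_mul_const, intervalIntegral.integral_mul_const,
          integral_rpow_sub_left a hs, integral_rpow_sub_right b hs, Real.rpow_add_one hba.ne']
        field_simp

end SConvex

lemma abs_integral_mul_le_Lp_mul_Lq_of_le {f g : ℝ → ℝ} {a b p q : ℝ} (hab : a ≤ b)
    (hpq : p.HolderConjugate q) (hf : MemLp f (ENNReal.ofReal p) (volume.restrict (Ioc a b)))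
    (hg : MemLp g (ENNReal.ofReal q) (volume.restrict (Ioc a b))) :
    |∫ σ in a..b, f σ * g σ|
      ≤ (∫ σ in a..b, |f σ| ^ p) ^ (1 / p) * (∫ σ in a..b, |g σ| ^ q) ^ (1 / q) := by
  simp only [integral_of_le hab, ← Real.norm_eq_abs]
  exact (MeasureTheory.norm_integral_le_integral_norm _).trans
    ((integral_congr_ae (ae_of_all _ fun σ => norm_mul _ _)).trans_le
      (integral_mul_norm_le_Lp_mul_Lq hpq hf hg))

lemma memLp_of_abs_rpow_le {f : ℝ → ℝ} {S : Set ℝ} {q M : ℝ} (r : ENNReal)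
    [IsFiniteMeasure (volume.restrict S)] (hS : MeasurableSet S) (hq : 0 < q)
    (hf : AEStronglyMeasurable f (volume.restrict S)) (hM : ∀ σ ∈ S, |f σ| ^ q ≤ M) :
    MemLp f r (volume.restrict S) :=
  MemLp.of_bound hf (M ^ q⁻¹) <| (ae_restrict_iff' hS).2 <| ae_of_all _ fun σ hσ =>
    (Real.le_rpow_inv_iff_of_pos (abs_nonneg _)
      ((Real.rpow_nonneg (abs_nonneg _) _).trans (hM σ hσ)) hq).2 (hM σ hσ)

lemma integral_abs_affine_rpow {u v a b p : ℝ} (hu : 0 ≤ u) (huv : u < v) (hab : a ≤ b)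
    (hp : -1 < p) :
    ∫ σ in a..b, |(v - u) * σ - (v * a - u * b)| ^ p
      = (b - a) ^ (p + 1) * ((v ^ (p + 1) - u ^ (p + 1)) / ((p + 1) * (v - u))) := by
  have hba : 0 ≤ b - a := sub_nonneg.2 hab
  have hw : ∀ σ ∈ uIcc a b,
      |(v - u) * σ - (v * a - u * b)| = (v - u) * σ + -(v * a - u * b) := fun σ hσ => by
    rw [uIcc_of_le hab] at hσ
    have hpos : 0 ≤ (v - u) * σ - (v * a - u * b) := by
      nlinarith [mul_nonneg (sub_pos.2 huv).le (sub_nonneg.2 hσ.1), mul_nonneg hu hba]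
    rw [abs_of_nonneg hpos, sub_eq_add_neg]
  rw [integral_congr fun σ hσ => congrArg (· ^ p) (hw σ hσ),
    integral_comp_mul_add (fun τ => τ ^ p) (sub_pos.2 huv).ne', integral_rpow (Or.inl hp),
    show (v - u) * b + -(v * a - u * b) = v * (b - a) by ring,
    show (v - u) * a + -(v * a - u * b) = u * (b - a) by ring,
    Real.mul_rpow hu hba, Real.mul_rpow (hu.trans huv.le) hba, smul_eq_mul]
  field_simp

lemma memLp_of_sConvex_abs_rpow {f' : ℝ → ℝ} {q s a b : ℝ} (hab : a < b) (hq : 0 < q)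
    (hs : 0 ≤ s) (hf' : AEStronglyMeasurable f' (volume.restrict (Ioc a b)))
    (hsc : ∀ t ∈ Icc (0 : ℝ) 1,
      |f' (t * a + (1 - t) * b)| ^ q ≤ t ^ s * |f' a| ^ q + (1 - t) ^ s * |f' b| ^ q) :
    MemLp f' (ENNReal.ofReal q) (volume.restrict (Ioc a b)) :=
  memLp_of_abs_rpow_le _ measurableSet_Ioc hq hf' fun σ hσ =>
    le_add_of_sConvex (g := fun σ => |f' σ| ^ q) hab hs (by positivity) (by positivity) hsc
      (Ioc_subset_Icc_self hσ)

lemma abs_integral_affine_mul_le_s7 {f' : ℝ → ℝ} {u v p q s a b : ℝ} (hu : 0 ≤ u)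
    (huv : u < v) (hab : a ≤ b) (hpq : p.HolderConjugate q) (hs : 0 ≤ s)
    (hf' : AEStronglyMeasurable f' (volume.restrict (Ioc a b)))
    (hsc : ∀ t ∈ Icc (0 : ℝ) 1,
      |f' (t * a + (1 - t) * b)| ^ q ≤ t ^ s * |f' a| ^ q + (1 - t) ^ s * |f' b| ^ q) :
    |∫ σ in a..b, ((v - u) * σ - (v * a - u * b)) * f' σ|
      ≤ (b - a) ^ 2 * ((v ^ (p + 1) - u ^ (p + 1)) / ((p + 1) * (v - u))) ^ (1 / p)
        * ((|f' a| ^ q + |f' b| ^ q) / (s + 1)) ^ (1 / q) := by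
  rcases hab.eq_or_lt with rfl | hab
  · simp
  set L := (v ^ (p + 1) - u ^ (p + 1)) / ((p + 1) * (v - u))
  set M := (|f' a| ^ q + |f' b| ^ q) / (s + 1)
  have hba : 0 < b - a := sub_pos.2 hab
  have hwmem : MemLp (fun σ => (v - u) * σ - (v * a - u * b)) (ENNReal.ofReal p)
      (volume.restrict (Ioc a b)) :=
    (MonotoneOn.memLp_isCompact isCompact_Icc fun x _ y _ hxy => by gcongr).mono_measure
      (Measure.restrict_mono Ioc_subset_Icc_self le_rfl)
  have hf'mem := memLp_of_sConvex_abs_rpow hab hpq.symm.pos hs hf' hsc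
  have hf'q : ∫ σ in a..b, |f' σ| ^ q ≤ (b - a) * M := by
    refine integral_le_of_sConvex hab (by linarith) ?_ hsc
    have h := hf'mem.integrable_norm_rpow (by simpa using hpq.symm.pos) ENNReal.ofReal_ne_top
    simp only [ENNReal.toReal_ofReal hpq.symm.nonneg, Real.norm_eq_abs] at h
    exact (intervalIntegrable_iff_integrableOn_Ioc_of_le hab.le).2 h
  have hL : 0 ≤ L :=
    div_nonneg (sub_nonneg.2 (Real.rpow_le_rpow hu huv.le (by linarith [hpq.pos])))
      (mul_nonneg (by linarith [hpq.pos]) (sub_pos.2 huv).le)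
  have hexp : ((b - a) ^ (p + 1)) ^ (1 / p) * (b - a) ^ (1 / q) = (b - a) ^ 2 := by
    rw [← Real.rpow_mul hba.le, ← Real.rpow_add hba, ← Real.rpow_natCast]
    congr 1
    field_simp [hpq.ne_zero]
    rw [hpq.div_conj_eq_sub_one]
    push_cast
    ring
  have hnonneg {g : ℝ → ℝ} (r : ℝ) : 0 ≤ ∫ σ in a..b, |g σ| ^ r :=
    intervalIntegral.integral_nonneg hab.le fun σ _ => by positivity
  calc |∫ σ in a..b, ((v - u) * σ - (v * a - u * b)) * f' σ|
      ≤ (∫ σ in a..b, |(v - u) * σ - (v * a - u * b)| ^ p) ^ (1 / p)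
          * (∫ σ in a..b, |f' σ| ^ q) ^ (1 / q) :=
        abs_integral_mul_le_Lp_mul_Lq_of_le hab.le hpq hwmem hf'mem
    _ ≤ (∫ σ in a..b, |(v - u) * σ - (v * a - u * b)| ^ p) ^ (1 / p)
          * ((b - a) * M) ^ (1 / q) := by
        gcongr
        · exact Real.rpow_nonneg (hnonneg p) _
        · exact hnonneg q
        · exact hpq.symm.one_div_nonneg
    _ = (b - a) ^ 2 * L ^ (1 / p) * M ^ (1 / q) := by
        rw [integral_abs_affine_rpow hu huv hab.le (by linarith [hpq.pos]),
          Real.mul_rpow (by positivity) hL, Real.mul_rpow hba.le (by positivity), ← hexp]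
        ring

lemma integral_affine_mul_deriv {f f' : ℝ → ℝ} {a b : ℝ}
    (hf : ∀ σ ∈ uIcc a b, HasDerivAt f (f' σ) σ) (hf' : IntervalIntegrable f' volume a b)
    (α β : ℝ) :
    ∫ σ in a..b, (α * σ - β) * f' σ
      = (α * b - β) * f b - (α * a - β) * f a - α * ∫ σ in a..b, f σ := by
  rw [integral_mul_deriv_eq_deriv_mul (u := fun σ => α * σ - β) (u' := fun _ => α)
    (fun σ _ => ((hasDerivAt_id σ).const_mul α).sub_const β |>.congr_deriv (mul_one α)) hf
    intervalIntegrable_const hf', intervalIntegral.integral_const_mul]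

lemma sub_average_eq_integral_affine_mul_deriv {f f' : ℝ → ℝ} {u v x : ℝ} (huv : u < v)
    (hx : x ∈ Icc u v) (hf : ∀ y ∈ Icc u v, HasDerivAt f (f' y) y)
    (hf' : IntervalIntegrable f' volume u v) :
    ((v - x) * (v * f v - u * f x) + (x - u) * (v * f x - u * f u)) / (v - u) ^ 2
        - (1 / (v - u)) * ∫ μ in u..v, f μ
      = ((∫ σ in x..v, ((v - u) * σ - (v * x - u * v)) * f' σ)
          + ∫ σ in u..x, ((v - u) * σ - (v * u - u * x)) * f' σ) / (v - u) ^ 2 := by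
  rw [← uIcc_of_le huv.le] at hf hx
  have hxv : uIcc x v ⊆ uIcc u v := uIcc_subset_uIcc hx right_mem_uIcc
  have hux : uIcc u x ⊆ uIcc u v := uIcc_subset_uIcc left_mem_uIcc hx
  have hfc : ContinuousOn f (uIcc u v) := fun y hy => (hf y hy).continuousAt.continuousWithinAt
  rw [integral_affine_mul_deriv (fun y hy => hf y (hxv hy)) (hf'.mono_set hxv),
    integral_affine_mul_deriv (fun y hy => hf y (hux hy)) (hf'.mono_set hux),
    ← integral_add_adjacent_intervals (hfc.mono hux).intervalIntegrable
      (hfc.mono hxv).intervalIntegrable]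
  field_simp [(sub_pos.2 huv).ne']
  ring

theorem stmt_7_general (f f' : ℝ → ℝ) (u v p q s : ℝ) (hu : 0 < u) (huv : u < v)
    (hq : 1 < q) (hpq : 1 / p + 1 / q = 1) (hs0 : 0 < s)
    (hderiv : ∀ y ∈ interior (Set.Ici (0:ℝ)), HasDerivAt f (f' y) y)
    (hint : IntervalIntegrable f' MeasureTheory.volume u v)
    (hsconv : ∀ a ∈ Set.Icc u v, ∀ b ∈ Set.Icc u v, ∀ t ∈ Set.Icc (0:ℝ) 1,
      |f' (t * a + (1 - t) * b)| ^ q ≤ t ^ s * |f' a| ^ q + (1 - t) ^ s * |f' b| ^ q)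
    (x : ℝ) (hx : x ∈ Set.Icc u v) :
    |((v - x) * (v * f v - u * f x) + (x - u) * (v * f x - u * f u)) / (v - u) ^ 2
        - (1 / (v - u)) * ∫ μ in u..v, f μ|
      ≤ ((v - x) ^ 2 / (v - u) ^ 2) *
          ((v ^ (p + 1) - u ^ (p + 1)) / ((p + 1) * (v - u))) ^ (1 / p) *
          ((|f' x| ^ q + |f' v| ^ q) / (s + 1)) ^ (1 / q)
        + ((x - u) ^ 2 / (v - u) ^ 2) *
          ((v ^ (p + 1) - u ^ (p + 1)) / ((p + 1) * (v - u))) ^ (1 / p) *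
          ((|f' x| ^ q + |f' u| ^ q) / (s + 1)) ^ (1 / q) := by
  have hpq' : p.HolderConjugate q :=
    (Real.holderConjugate_iff.2 ⟨hq, by simpa only [one_div, add_comm] using hpq⟩).symm
  have hf : ∀ y ∈ Icc u v, HasDerivAt f (f' y) y := fun y hy =>
    hderiv y (by rw [interior_Ici]; exact hu.trans_le hy.1)
  have hmeas {a b : ℝ} (ha : a ∈ Icc u v) (hb : b ∈ Icc u v) :
      AEStronglyMeasurable f' (volume.restrict (Ioc a b)) := by
    rw [← uIcc_of_le huv.le] at ha hb
    exact (hint.mono_set (uIcc_subset_uIcc ha hb)).1.aestronglyMeasurable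
  have hu' : u ∈ Icc u v := left_mem_Icc.2 huv.le
  have hv' : v ∈ Icc u v := right_mem_Icc.2 huv.le
  have hright := abs_integral_affine_mul_le_s7 hu.le huv hx.2 hpq' hs0.le (hmeas hx hv')
    (hsconv x hx v hv')
  have hleft := abs_integral_affine_mul_le_s7 hu.le huv hx.1 hpq' hs0.le (hmeas hu' hx)
    (hsconv u hu' x hx)
  rw [add_comm (|f' u| ^ q)] at hleft
  rw [sub_average_eq_integral_affine_mul_deriv huv hx hf hint, abs_div, abs_sq]
  calc _ ≤ (_ + _) / (v - u) ^ 2 := by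
        gcongr
        exact (abs_add_le _ _).trans (add_le_add hright hleft)
    _ = _ := by ring

theorem stmt_7 (f f' : ℝ → ℝ) (u v p q s : ℝ) (hu : 0 < u) (huv : u < v)
    (hq : 1 < q) (hpq : 1 / p + 1 / q = 1) (hs0 : 0 < s) (hs1 : s ≤ 1)
    (hderiv : ∀ y ∈ interior (Set.Ici (0:ℝ)), HasDerivAt f (f' y) y)
    (hint : IntervalIntegrable f' MeasureTheory.volume u v)
    (hsconv : ∀ a ∈ Set.Icc u v, ∀ b ∈ Set.Icc u v, ∀ t ∈ Set.Icc (0:ℝ) 1,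
      |f' (t * a + (1 - t) * b)| ^ q ≤ t ^ s * |f' a| ^ q + (1 - t) ^ s * |f' b| ^ q)
    (x : ℝ) (hx : x ∈ Set.Icc u v) :
    |((v - x) * (v * f v - u * f x) + (x - u) * (v * f x - u * f u)) / (v - u) ^ 2
        - (1 / (v - u)) * ∫ μ in u..v, f μ|
      ≤ ((v - x) ^ 2 / (v - u) ^ 2) *
          ((v ^ (p + 1) - u ^ (p + 1)) / ((p + 1) * (v - u))) ^ (1 / p) *
          ((|f' x| ^ q + |f' v| ^ q) / (s + 1)) ^ (1 / q)
        + ((x - u) ^ 2 / (v - u) ^ 2) *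
          ((v ^ (p + 1) - u ^ (p + 1)) / ((p + 1) * (v - u))) ^ (1 / p) *
          ((|f' x| ^ q + |f' u| ^ q) / (s + 1)) ^ (1 / q) :=
  stmt_7_general f f' u v p q s hu huv hq hpq hs0 hderiv hint hsconv x hx
end

section
/- Let J = [0,∞) and let f : J → ℝ be differentiable on the interior of J with f' integrable on [u,v], where u, v ∈ J and 0 < u < v. Let q > 1 and p satisfy 1/p + 1/q = 1, and let s ∈ (0,1]. If |f'|^q is s-convex in the second sense on [u,v], then |(v·f(v) - u·f(u))/(v-u) - (1/(v-u))·∫_u^v f(μ) dμ| ≤ L_p(u,v)·((|f'(u)|^q + |f'(v)|^q)/(s+1))^{1/q}. -/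
/-!
Integrating by parts, `v f(v) - u f(u) - ∫ f = ∫ x f'(x) dx`. Hölder's inequality bounds
`|∫ x f'(x) dx|` by `(∫ x^p)^(1/p) (∫ |f'|^q)^(1/q)`, where `∫_u^v x^p = (v - u) L_p(u,v)^p`,
and the right half of the Hermite–Hadamard inequality for `s`-convex functions,
`∫_u^v g ≤ (v - u) (g(u) + g(v)) / (s + 1)`, applied to `g = |f'|^q` bounds the second factor.
The factors `(v - u)^(1/p)` and `(v - u)^(1/q)` recombine to cancel the `1 / (v - u)`.
-/

open MeasureTheory Set Real

/-- `s`-convexity in the second sense. -/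
def IsSConvexOn (s : ℝ) (S : Set ℝ) (g : ℝ → ℝ) : Prop :=
  ∀ a ∈ S, ∀ b ∈ S, ∀ t ∈ Icc (0 : ℝ) 1,
    g (t * a + (1 - t) * b) ≤ t ^ s * g a + (1 - t) ^ s * g b

theorem integral_id_mul_deriv_eq {f f' : ℝ → ℝ} {a b : ℝ}
    (hf : ∀ x ∈ uIcc a b, HasDerivAt f (f' x) x) (hf' : IntervalIntegrable f' volume a b) :
    ∫ x in a..b, x * f' x = b * f b - a * f a - ∫ x in a..b, f x := by
  simpa only [one_mul] using intervalIntegral.integral_mul_deriv_eq_deriv_mul (u' := fun _ => 1)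
    (fun x _ => hasDerivAt_id' x) hf intervalIntegrable_const hf'

theorem abs_intervalIntegral_mul_le_Lp_mul_Lq {p q a b : ℝ} (hpq : p.HolderConjugate q)
    (hab : a ≤ b) {F G : ℝ → ℝ}
    (hF : AEStronglyMeasurable F (volume.restrict (Ioc a b)))
    (hG : AEStronglyMeasurable G (volume.restrict (Ioc a b)))
    (hFp : IntervalIntegrable (fun x => |F x| ^ p) volume a b)
    (hGq : IntervalIntegrable (fun x => |G x| ^ q) volume a b) :
    |∫ x in a..b, F x * G x| ≤
      (∫ x in a..b, |F x| ^ p) ^ (1 / p) * (∫ x in a..b, |G x| ^ q) ^ (1 / q) := by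
  have memLp {H : ℝ → ℝ} {r : ℝ} (hr : 0 < r)
      (hH : AEStronglyMeasurable H (volume.restrict (Ioc a b)))
      (hHr : IntervalIntegrable (fun x => |H x| ^ r) volume a b) :
      MemLp H (ENNReal.ofReal r) (volume.restrict (Ioc a b)) := by
    rw [← integrable_norm_rpow_iff hH (by simpa using hr) ENNReal.ofReal_ne_top,
      ENNReal.toReal_ofReal hr.le]
    exact (intervalIntegrable_iff_integrableOn_Ioc_of_le hab).mp hHr
  have holder := integral_mul_norm_le_Lp_mul_Lq hpq (memLp hpq.pos hF hFp)
    (memLp hpq.symm.pos hG hGq)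
  simp only [Real.norm_eq_abs, ← abs_mul] at holder
  rw [intervalIntegral.integral_of_le hab, intervalIntegral.integral_of_le hab,
    intervalIntegral.integral_of_le hab]
  exact (abs_integral_le_integral_abs).trans holder

theorem div_rpow_mul_rpow_eq {p q c X Y : ℝ} (hpq : 1 / p + 1 / q = 1) (hc : 0 < c) (hX : 0 ≤ X)
    (hY : 0 ≤ Y) : (X / c) ^ (1 / p) * Y ^ (1 / q) = X ^ (1 / p) * (c * Y) ^ (1 / q) / c := by
  have hsplit : c ^ (1 / p) * c ^ (1 / q) = c := by rw [← rpow_add hc, hpq, rpow_one]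
  have hcp : 0 < c ^ (1 / p) := rpow_pos_of_pos hc _
  rw [div_rpow hX hc.le, mul_rpow hc.le hY]
  nth_rw 3 [← hsplit]
  field_simp

theorem continuous_sub_div_rpow_mul_add {s : ℝ} (hs : 0 ≤ s) (u v A B : ℝ) :
    Continuous fun x => ((x - u) / (v - u)) ^ s * B + ((v - x) / (v - u)) ^ s * A := by
  have := continuous_rpow_const hs
  fun_prop

section SConvex

variable {s u v : ℝ} {g : ℝ → ℝ}

theorem IsSConvexOn.le_of_mem_Icc (hg : IsSConvexOn s (Icc u v) g) (huv : u < v) {x : ℝ}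
    (hx : x ∈ Icc u v) :
    g x ≤ ((x - u) / (v - u)) ^ s * g v + ((v - x) / (v - u)) ^ s * g u := by
  have hvu : 0 < v - u := sub_pos.mpr huv
  have ht : (x - u) / (v - u) ∈ Icc (0 : ℝ) 1 :=
    ⟨div_nonneg (by linarith [hx.1]) hvu.le, (div_le_one hvu).mpr (by linarith [hx.2])⟩
  have h := hg v (right_mem_Icc.mpr huv.le) u (left_mem_Icc.mpr huv.le) _ ht
  rwa [show 1 - (x - u) / (v - u) = (v - x) / (v - u) by field_simp; ring,
    show (x - u) / (v - u) * v + (v - x) / (v - u) * u = x by field_simp; ring] at h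

theorem integral_div_rpow {c : ℝ} (hs : -1 < s) (hc : c ≠ 0) :
    ∫ x in (0 : ℝ)..c, (x / c) ^ s = c / (s + 1) := by
  rw [intervalIntegral.integral_comp_div (fun y => y ^ s) hc, zero_div, div_self hc,
    integral_rpow (Or.inl hs), one_rpow, zero_rpow (by linarith), smul_eq_mul]
  ring

theorem integral_sub_div_rpow (hs : -1 < s) (huv : u ≠ v) :
    ∫ x in u..v, ((x - u) / (v - u)) ^ s = (v - u) / (s + 1) := by
  rw [intervalIntegral.integral_comp_sub_right (fun y => (y / (v - u)) ^ s), sub_self]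
  exact integral_div_rpow hs (sub_ne_zero.mpr huv.symm)

theorem integral_sub_div_rpow' (hs : -1 < s) (huv : u ≠ v) :
    ∫ x in u..v, ((v - x) / (v - u)) ^ s = (v - u) / (s + 1) := by
  rw [intervalIntegral.integral_comp_sub_left (fun y => (y / (v - u)) ^ s), sub_self]
  exact integral_div_rpow hs (sub_ne_zero.mpr huv.symm)

theorem IsSConvexOn.intervalIntegrable (hg : IsSConvexOn s (Icc u v) g) (hs : 0 ≤ s)
    (huv : u < v) (hmeas : AEStronglyMeasurable g (volume.restrict (Ioc u v)))
    (hg₀ : ∀ x ∈ Icc u v, 0 ≤ g x) : IntervalIntegrable g volume u v := by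
  rw [intervalIntegrable_iff_integrableOn_Ioc_of_le huv.le]
  refine Integrable.mono' (continuous_sub_div_rpow_mul_add hs u v (g u) (g v)).integrableOn_Ioc
    hmeas ?_
  filter_upwards [ae_restrict_mem measurableSet_Ioc] with x hx
  rw [norm_of_nonneg (hg₀ x (Ioc_subset_Icc_self hx))]
  exact hg.le_of_mem_Icc huv (Ioc_subset_Icc_self hx)

theorem IsSConvexOn.intervalIntegral_le (hg : IsSConvexOn s (Icc u v) g) (hs : 0 ≤ s)
    (huv : u < v) (hint : IntervalIntegrable g volume u v) :
    ∫ x in u..v, g x ≤ (v - u) * ((g u + g v) / (s + 1)) := by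
  have hcont (c : ℝ → ℝ) (hc : Continuous c) (A : ℝ) :
      IntervalIntegrable (fun x => c x ^ s * A) volume u v :=
    ((continuous_rpow_const hs).comp hc).intervalIntegrable u v |>.mul_const A
  calc ∫ x in u..v, g x
      ≤ ∫ x in u..v, ((x - u) / (v - u)) ^ s * g v + ((v - x) / (v - u)) ^ s * g u :=
        intervalIntegral.integral_mono_on huv.le hint
          ((continuous_sub_div_rpow_mul_add hs u v _ _).intervalIntegrable u v)
          fun x hx => hg.le_of_mem_Icc huv hx
    _ = (v - u) * ((g u + g v) / (s + 1)) := by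
        rw [intervalIntegral.integral_add (hcont _ (by fun_prop) _) (hcont _ (by fun_prop) _),
          intervalIntegral.integral_mul_const, intervalIntegral.integral_mul_const,
          integral_sub_div_rpow (by linarith) huv.ne, integral_sub_div_rpow' (by linarith) huv.ne]
        ring

end SConvex

theorem stmt_8_general (f f' : ℝ → ℝ) (u v p q s : ℝ) (hu : 0 < u) (huv : u < v)
    (hq : 1 < q) (hpq : 1 / p + 1 / q = 1) (hs0 : 0 < s)
    (hderiv : ∀ y ∈ interior (Set.Ici (0:ℝ)), HasDerivAt f (f' y) y)
    (hint : IntervalIntegrable f' MeasureTheory.volume u v)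
    (hsconv : ∀ a ∈ Set.Icc u v, ∀ b ∈ Set.Icc u v, ∀ t ∈ Set.Icc (0:ℝ) 1,
      |f' (t * a + (1 - t) * b)| ^ q ≤ t ^ s * |f' a| ^ q + (1 - t) ^ s * |f' b| ^ q) :
    |(v * f v - u * f u) / (v - u) - (1 / (v - u)) * ∫ μ in u..v, f μ|
      ≤ ((v ^ (p + 1) - u ^ (p + 1)) / ((p + 1) * (v - u))) ^ (1 / p) *
          ((|f' u| ^ q + |f' v| ^ q) / (s + 1)) ^ (1 / q) := by
  have hvu : 0 < v - u := sub_pos.mpr huv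
  have hqp : q.HolderConjugate p :=
    holderConjugate_iff.mpr ⟨hq, by simpa only [one_div, add_comm] using hpq⟩
  have hg : IsSConvexOn s (Icc u v) (fun x => |f' x| ^ q) := hsconv
  have hf : ∀ x ∈ uIcc u v, HasDerivAt f (f' x) x := fun x hx =>
    hderiv x (by rw [interior_Ici]; exact hu.trans_le (uIcc_of_le huv.le ▸ hx).1)
  have hmeas : AEStronglyMeasurable f' (volume.restrict (Ioc u v)) := hint.1.aestronglyMeasurable
  have hg_int : IntervalIntegrable (fun x => |f' x| ^ q) volume u v :=
    hg.intervalIntegrable hs0.le huv (hmeas.norm.aemeasurable.pow_const q).aestronglyMeasurable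
      fun x _ => by positivity
  have hid_int : IntervalIntegrable (fun x => |x| ^ p) volume u v :=
    (continuous_abs.rpow_const fun _ => Or.inr hqp.symm.nonneg).intervalIntegrable u v
  have hLp : ∫ x in u..v, |x| ^ p = (v ^ (p + 1) - u ^ (p + 1)) / (p + 1) := by
    rw [← integral_rpow (Or.inl (by linarith [hqp.symm.pos]))]
    refine intervalIntegral.integral_congr fun x hx => ?_
    rw [abs_of_pos (hu.trans_le (uIcc_of_le huv.le ▸ hx).1)]
  have hLp_nonneg : 0 ≤ ∫ x in u..v, |x| ^ p :=
    intervalIntegral.integral_nonneg huv.le fun _ _ => by positivity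
  have hLq_nonneg : 0 ≤ ∫ x in u..v, |f' x| ^ q :=
    intervalIntegral.integral_nonneg huv.le fun _ _ => by positivity
  have holder := abs_intervalIntegral_mul_le_Lp_mul_Lq (F := fun x => x) hqp.symm huv.le
    aestronglyMeasurable_id hmeas hid_int hg_int
  have hHadamard := hg.intervalIntegral_le hs0.le huv hg_int
  rw [show (v * f v - u * f u) / (v - u) - (1 / (v - u)) * ∫ μ in u..v, f μ
      = (∫ x in u..v, x * f' x) / (v - u) by rw [integral_id_mul_deriv_eq hf hint]; field_simp,
    abs_div, abs_of_pos hvu, ← div_div, ← hLp,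
    div_rpow_mul_rpow_eq hpq hvu hLp_nonneg (by positivity)]
  gcongr
  exact holder.trans (by gcongr)

theorem stmt_8 (f f' : ℝ → ℝ) (u v p q s : ℝ) (hu : 0 < u) (huv : u < v)
    (hq : 1 < q) (hpq : 1 / p + 1 / q = 1) (hs0 : 0 < s) (hs1 : s ≤ 1)
    (hderiv : ∀ y ∈ interior (Set.Ici (0:ℝ)), HasDerivAt f (f' y) y)
    (hint : IntervalIntegrable f' MeasureTheory.volume u v)
    (hsconv : ∀ a ∈ Set.Icc u v, ∀ b ∈ Set.Icc u v, ∀ t ∈ Set.Icc (0:ℝ) 1,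
      |f' (t * a + (1 - t) * b)| ^ q ≤ t ^ s * |f' a| ^ q + (1 - t) ^ s * |f' b| ^ q) :
    |(v * f v - u * f u) / (v - u) - (1 / (v - u)) * ∫ μ in u..v, f μ|
      ≤ ((v ^ (p + 1) - u ^ (p + 1)) / ((p + 1) * (v - u))) ^ (1 / p) *
          ((|f' u| ^ q + |f' v| ^ q) / (s + 1)) ^ (1 / q) :=
  stmt_8_general f f' u v p q s hu huv hq hpq hs0 hderiv hint hsconv
end

section
/- Let 0 < u < v, s ∈ (0,1], q > 1 and p satisfy 1/p + 1/q = 1. Then |(s-1)·L_s(u,v)^s + A(u,v)^s| ≤ (L_p(u,v)/2)·(s/(s+1))^{1/q}·[(((u+v)/2)^{(s-1)q} + v^{(s-1)q})^{1/q} + (((u+v)/2)^{(s-1)q} + u^{(s-1)q})^{1/q}]. -/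
/-!
Write `A = (u + v) / 2`. Hermite–Hadamard for the concave `x ^ s`, together with
`A ^ s ≤ v ^ s ≤ (s + 1) L_s ^ s`, puts the left-hand side between `0` and `2s/(s+1) · A ^ s`,
and since `2s/(s+1) ≤ 1` this is at most `(2s/(s+1)) ^ (1/q) · A ^ s`. On the right,
Hermite–Hadamard for the convex `x ^ p` gives `A ≤ L_p`, the power mean inequality
`M_{s-1} ≤ M_{(s-1)q}` bounds each bracketed term from below, and
`A ^ (s-1) ≤ (u ^ (s-1) + v ^ (s-1)) / 2` (AM–GM, as `s - 1 ≤ 0`) leaves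
`2 ^ (1 + 1/q) · A ^ (s-1)`.
-/

open Real MeasureTheory

theorem integral_affine_midpoint (u v c d : ℝ) :
    ∫ x in u..v, (c + d * (x - (u + v) / 2)) = (v - u) * c := by
  have hlin : IntervalIntegrable (fun x : ℝ => d * (x - (u + v) / 2)) volume u v :=
    (by fun_prop : Continuous fun x : ℝ => d * (x - (u + v) / 2)).intervalIntegrable u v
  rw [intervalIntegral.integral_add intervalIntegrable_const hlin,
    intervalIntegral.integral_const_mul, intervalIntegral.integral_comp_sub_right fun x => x,
    integral_id, intervalIntegral.integral_const, smul_eq_mul]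
  ring

theorem rpow_tangent_le_rpow {p a x : ℝ} (hp : 1 ≤ p) (ha : 0 < a) (hx : 0 ≤ x) :
    a ^ p + p * a ^ (p - 1) * (x - a) ≤ x ^ p := by
  have hbernoulli := one_add_mul_self_le_rpow_one_add (s := x / a - 1)
    (by linarith [div_nonneg hx ha.le]) hp
  rw [add_sub_cancel, div_rpow hx ha.le, le_div_iff₀ (rpow_pos_of_pos ha p)] at hbernoulli
  rw [rpow_sub_one ha.ne']
  refine le_of_eq_of_le ?_ hbernoulli
  field_simp

theorem rpow_le_rpow_tangent {p a x : ℝ} (hp₀ : 0 ≤ p) (hp₁ : p ≤ 1) (ha : 0 < a) (hx : 0 ≤ x) :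
    x ^ p ≤ a ^ p + p * a ^ (p - 1) * (x - a) := by
  have hbernoulli := rpow_one_add_le_one_add_mul_self (s := x / a - 1)
    (by linarith [div_nonneg hx ha.le]) hp₀ hp₁
  rw [add_sub_cancel, div_rpow hx ha.le, div_le_iff₀ (rpow_pos_of_pos ha p)] at hbernoulli
  rw [rpow_sub_one ha.ne']
  refine le_of_le_of_eq hbernoulli ?_
  field_simp

/-- `L_p(u, v) ^ p`. -/
noncomputable def genLogMeanPow (p u v : ℝ) : ℝ :=
  (v ^ (p + 1) - u ^ (p + 1)) / ((p + 1) * (v - u))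

section genLogMeanPow

variable {p u v : ℝ}

theorem genLogMeanPow_eq_integral (hp : -1 < p) :
    genLogMeanPow p u v = (∫ x in u..v, x ^ p) / (v - u) := by
  rw [genLogMeanPow, integral_rpow (Or.inl hp), div_div, mul_comm]

theorem rpow_midpoint_le_genLogMeanPow (hp : 1 ≤ p) (hu : 0 < u) (huv : u < v) :
    ((u + v) / 2) ^ p ≤ genLogMeanPow p u v := by
  have hA : 0 < (u + v) / 2 := by linarith
  rw [genLogMeanPow_eq_integral (by linarith), le_div_iff₀ (by linarith), mul_comm,
    ← integral_affine_midpoint u v _ (p * ((u + v) / 2) ^ (p - 1))]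
  refine intervalIntegral.integral_mono_on huv.le
    (Continuous.intervalIntegrable (by fun_prop) _ _)
    (intervalIntegral.intervalIntegrable_rpow (Or.inl (by linarith))) fun x hx => ?_
  exact rpow_tangent_le_rpow hp hA (hu.le.trans hx.1)

theorem genLogMeanPow_le_rpow_midpoint (hp₀ : 0 ≤ p) (hp₁ : p ≤ 1) (hu : 0 < u) (huv : u < v) :
    genLogMeanPow p u v ≤ ((u + v) / 2) ^ p := by
  have hA : 0 < (u + v) / 2 := by linarith
  rw [genLogMeanPow_eq_integral (by linarith), div_le_iff₀ (by linarith), mul_comm,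
    ← integral_affine_midpoint u v _ (p * ((u + v) / 2) ^ (p - 1))]
  refine intervalIntegral.integral_mono_on huv.le
    (intervalIntegral.intervalIntegrable_rpow (Or.inl (by linarith)))
    (Continuous.intervalIntegrable (by fun_prop) _ _) fun x hx => ?_
  exact rpow_le_rpow_tangent hp₀ hp₁ hA (hu.le.trans hx.1)

theorem rpow_midpoint_le_add_one_mul_genLogMeanPow (hp : 0 ≤ p) (hu : 0 ≤ u) (huv : u < v) :
    ((u + v) / 2) ^ p ≤ (p + 1) * genLogMeanPow p u v := by
  have hv : 0 < v := hu.trans_lt huv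
  have hupv : u ^ p ≤ v ^ p := rpow_le_rpow hu huv.le hp
  calc ((u + v) / 2) ^ p ≤ v ^ p := rpow_le_rpow (by linarith) (by linarith) hp
    _ ≤ (v ^ (p + 1) - u ^ (p + 1)) / (v - u) := by
      rw [le_div_iff₀ (by linarith), rpow_add_one hv.ne', rpow_add_one' hu (by linarith)]
      nlinarith
    _ = (p + 1) * genLogMeanPow p u v := by
      rw [genLogMeanPow]
      field_simp

theorem midpoint_le_genLogMeanPow_rpow_inv (hp : 1 ≤ p) (hu : 0 < u) (huv : u < v) :
    (u + v) / 2 ≤ genLogMeanPow p u v ^ (1 / p) := by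
  rw [one_div, le_rpow_inv_iff_of_pos (by linarith) ((rpow_pos_of_pos (by linarith) p).le.trans
    (rpow_midpoint_le_genLogMeanPow hp hu huv)) (by linarith)]
  exact rpow_midpoint_le_genLogMeanPow hp hu huv

end genLogMeanPow

theorem rpow_midpoint_le_of_nonpos {e x y : ℝ} (he : e ≤ 0) (hx : 0 < x) (hy : 0 < y) :
    ((x + y) / 2) ^ e ≤ (x ^ e + y ^ e) / 2 := by
  have hgeom : x ^ (1 / 2 : ℝ) * y ^ (1 / 2 : ℝ) ≤ (x + y) / 2 := by
    linarith [geom_mean_le_arith_mean2_weighted (w₁ := 1 / 2) (w₂ := 1 / 2) (by norm_num)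
      (by norm_num) hx.le hy.le (by norm_num)]
  calc ((x + y) / 2) ^ e ≤ (x ^ (1 / 2 : ℝ) * y ^ (1 / 2 : ℝ)) ^ e :=
        rpow_le_rpow_of_nonpos (by positivity) hgeom he
    _ = (x ^ e) ^ (1 / 2 : ℝ) * (y ^ e) ^ (1 / 2 : ℝ) := by
        rw [mul_rpow (by positivity) (by positivity), ← rpow_mul hx.le, ← rpow_mul hy.le,
          ← rpow_mul hx.le, ← rpow_mul hy.le, mul_comm e]
    _ ≤ (x ^ e + y ^ e) / 2 := by
        linarith [geom_mean_le_arith_mean2_weighted (w₁ := 1 / 2) (w₂ := 1 / 2) (by norm_num)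
          (by norm_num) (rpow_nonneg hx.le e) (rpow_nonneg hy.le e) (by norm_num)]

theorem two_rpow_inv_mul_rpow_mean_le {e q x y : ℝ} (hq : 1 ≤ q) (hx : 0 ≤ x) (hy : 0 ≤ y) :
    2 ^ (1 / q) * ((x ^ e + y ^ e) / 2) ≤ (x ^ (e * q) + y ^ (e * q)) ^ (1 / q) := by
  have hq₀ : q ≠ 0 := by positivity
  have hroot (z : ℝ) (hz : 0 ≤ z) : (z ^ (e * q)) ^ (1 / q) = z ^ e := by
    rw [← rpow_mul hz, mul_assoc, mul_one_div_cancel hq₀, mul_one]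
  have hconc := (concaveOn_rpow (p := 1 / q) (by positivity)
    (div_le_one_of_le₀ hq (by positivity))).2 (rpow_nonneg hx (e * q)) (rpow_nonneg hy (e * q))
    (by norm_num : (0 : ℝ) ≤ 1 / 2) (by norm_num : (0 : ℝ) ≤ 1 / 2) (by norm_num)
  simp only [smul_eq_mul, hroot x hx, hroot y hy] at hconc
  calc 2 ^ (1 / q) * ((x ^ e + y ^ e) / 2)
      ≤ 2 ^ (1 / q) * ((x ^ (e * q) + y ^ (e * q)) / 2) ^ (1 / q) := by
        gcongr
        convert hconc using 2 <;> ring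
    _ = (x ^ (e * q) + y ^ (e * q)) ^ (1 / q) := by
        rw [← mul_rpow (by norm_num) (by positivity), mul_div_cancel₀ _ two_ne_zero]

theorem abs_sub_one_mul_genLogMeanPow_add_rpow_le {s u v : ℝ} (hs₀ : 0 ≤ s) (hs₁ : s ≤ 1)
    (hu : 0 < u) (huv : u < v) :
    |(s - 1) * genLogMeanPow s u v + ((u + v) / 2) ^ s|
      ≤ 2 * (s / (s + 1)) * ((u + v) / 2) ^ s := by
  have hupper := genLogMeanPow_le_rpow_midpoint hs₀ hs₁ hu huv
  have hlower := rpow_midpoint_le_add_one_mul_genLogMeanPow hs₀ hu.le huv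
  have hA : 0 ≤ ((u + v) / 2) ^ s := rpow_nonneg (by linarith) s
  rw [abs_of_nonneg (by nlinarith), mul_div_assoc', div_mul_eq_mul_div, le_div_iff₀ (by linarith)]
  nlinarith

theorem two_rpow_inv_mul_two_mul_rpow_midpoint_le {s q u v : ℝ} (hs : s ≤ 1) (hq : 1 ≤ q)
    (hu : 0 < u) (hv : 0 < v) :
    2 ^ (1 / q) * (2 * ((u + v) / 2) ^ (s - 1)) ≤
      (((u + v) / 2) ^ ((s - 1) * q) + v ^ ((s - 1) * q)) ^ (1 / q)
        + (((u + v) / 2) ^ ((s - 1) * q) + u ^ ((s - 1) * q)) ^ (1 / q) := by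
  have hA : 0 < (u + v) / 2 := by linarith
  have hjensen := rpow_midpoint_le_of_nonpos (by linarith : s - 1 ≤ 0) hu hv
  have hmean_v := two_rpow_inv_mul_rpow_mean_le (e := s - 1) hq hA.le hv.le
  have hmean_u := two_rpow_inv_mul_rpow_mean_le (e := s - 1) hq hA.le hu.le
  have h2 : (0 : ℝ) ≤ 2 ^ (1 / q) := by positivity
  nlinarith

theorem stmt_10 (u v p q s : ℝ) (hu : 0 < u) (huv : u < v)
    (hq : 1 < q) (hpq : 1 / p + 1 / q = 1) (hs0 : 0 < s) (hs1 : s ≤ 1) :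
    |(s - 1) * ((v ^ (s + 1) - u ^ (s + 1)) / ((s + 1) * (v - u))) + ((u + v) / 2) ^ s|
      ≤ (((v ^ (p + 1) - u ^ (p + 1)) / ((p + 1) * (v - u))) ^ (1 / p) / 2) *
          (s / (s + 1)) ^ (1 / q) *
          ((((u + v) / 2) ^ ((s - 1) * q) + v ^ ((s - 1) * q)) ^ (1 / q)
            + (((u + v) / 2) ^ ((s - 1) * q) + u ^ ((s - 1) * q)) ^ (1 / q)) := by
  have hp : 1 ≤ p := by
    have hq₀ : 0 < 1 / q := by positivity
    have hq₁ : 1 / q < 1 := (div_lt_one (by positivity)).2 hq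
    rw [← one_div_one_div p]
    exact one_le_one_div (by linarith) (by linarith)
  have hbracket := two_rpow_inv_mul_two_mul_rpow_midpoint_le hs1 hq.le hu (hu.trans huv)
  have hLp := midpoint_le_genLogMeanPow_rpow_inv hp hu huv
  have hA : 0 < (u + v) / 2 := by linarith
  set A := (u + v) / 2
  set B := (A ^ ((s - 1) * q) + v ^ ((s - 1) * q)) ^ (1 / q)
    + (A ^ ((s - 1) * q) + u ^ ((s - 1) * q)) ^ (1 / q)
  have hB : 0 ≤ B := le_trans (by positivity) hbracket
  have hr : 2 * (s / (s + 1)) ≤ 1 := by rw [← mul_div_assoc, div_le_one (by linarith)]; linarith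
  calc _ ≤ 2 * (s / (s + 1)) * A ^ s :=
        abs_sub_one_mul_genLogMeanPow_add_rpow_le hs0.le hs1 hu huv
    _ ≤ (2 * (s / (s + 1))) ^ (1 / q) * A ^ s := by
        gcongr
        exact self_le_rpow_of_le_one (by positivity) hr (div_le_one_of_le₀ hq.le (by positivity))
    _ = A / 2 * (s / (s + 1)) ^ (1 / q) * (2 ^ (1 / q) * (2 * A ^ (s - 1))) := by
        rw [mul_rpow zero_le_two (by positivity), rpow_sub_one hA.ne']
        field_simp
    _ ≤ A / 2 * (s / (s + 1)) ^ (1 / q) * B := by gcongr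
    _ ≤ genLogMeanPow p u v ^ (1 / p) / 2 * (s / (s + 1)) ^ (1 / q) * B := by gcongr
end
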